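/- arXiv:2106.08448 — 8 statements merged into one kernel-verified Lean document; each statement's English description precedes it below -/
import Mathlib

section
/- Let 0 < β < 1/20 and let k ∈ {2,3,4,5}. If v₁, …, v_k is a sequence of vertices such that for each i = 1, …, k-1 the vertices v_i and v_{i+1} are in 1-weak agreement (i.e., |N(v_i) △ N(v_{i+1})| < β·max(d(v_i), d(v_{i+1}))), then v₁ and v_k are in k-weak agreement, i.e., |N(v₁) △ N(v_k)| < kβ·max(d(v₁), d(v_k)). -/
open Finset

lemma aux_tri {V : Type*} [DecidableEq V] (A B C : Finset V) :
    (symmDiff A C).card ≤ (symmDiff A B).card + (symmDiff B C).card := by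
  have h : symmDiff A C ⊆ symmDiff A B ∪ symmDiff B C := by
    have e : symmDiff A C = symmDiff (symmDiff A B) (symmDiff B C) := by
      rw [symmDiff_assoc, symmDiff_symmDiff_cancel_left]
    rw [e, ← sup_eq_union, ← le_iff_subset]
    exact symmDiff_le_sup
  calc (symmDiff A C).card ≤ (symmDiff A B ∪ symmDiff B C).card := card_le_card h
    _ ≤ _ := card_union_le _ _

lemma aux_deg {V : Type*} [DecidableEq V] (A B : Finset V) :
    A.card ≤ B.card + (symmDiff A B).card := by
  have h : A ⊆ B ∪ symmDiff A B := by
    intro x hx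
    by_cases hb : x ∈ B
    · exact mem_union_left _ hb
    · exact mem_union_right _ (by simp [symmDiff_def, hx, hb])
  calc A.card ≤ (B ∪ symmDiff A B).card := card_le_card h
    _ ≤ _ := card_union_le _ _

lemma aux_ratio (a b s β : ℝ) (ha : 0 < a) (hb : 0 < b) (hβ0 : 0 < β) (hβ1 : β < 1)
    (hs : s < β * max a b) (hba : b ≤ a + s) (hab : a ≤ b + s) :
    b * (1 - β) < a ∧ a * (1 - β) < b := by
  rcases le_total a b with h | h
  · rw [max_eq_right h] at hs
    constructor <;> nlinarith
  · rw [max_eq_left h] at hs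
    constructor <;> nlinarith

lemma aux_edge (a b s β M : ℝ) (hβ0 : 0 < β) (hβ1 : β < 1)
    (hs : s < β * max a b) (haM : a * (1-β)^2 ≤ M) (hbM : b * (1-β)^2 ≤ M) :
    s * (1-β)^2 < β * M := by
  have h2 : (0:ℝ) < (1-β)^2 := pow_pos (by linarith) 2
  rcases le_total a b with h | h
  · rw [max_eq_right h] at hs
    have := mul_lt_mul_of_pos_right hs h2
    nlinarith
  · rw [max_eq_left h] at hs
    have := mul_lt_mul_of_pos_right hs h2
    nlinarith

lemma aux_b0 (a M β : ℝ) (ha : 0 ≤ a) (hβ0 : 0 ≤ β) (hβ1 : β ≤ 1) (h : a ≤ M) :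
    a * (1-β)^2 ≤ M := by
  nlinarith [mul_nonneg ha (mul_nonneg hβ0 (by linarith : (0:ℝ) ≤ 2 - β))]

lemma aux_b1 (a b M β : ℝ) (hβ0 : 0 ≤ β) (hc : 0 < 1-β) (r : a * (1-β) < b) (h : b ≤ M)
    (ha : 0 ≤ a) : a * (1-β)^2 ≤ M := by
  nlinarith [mul_lt_mul_of_pos_right r hc,
    mul_nonneg hβ0 (le_of_lt (lt_of_le_of_lt (mul_nonneg ha hc.le) r))]

lemma aux_b2 (a b c M β : ℝ) (hc : 0 < 1-β) (r1 : a * (1-β) < b) (r2 : b * (1-β) < c)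
    (h : c ≤ M) : a * (1-β)^2 ≤ M := by
  nlinarith [mul_lt_mul_of_pos_right r1 hc]

lemma aux_final (t β M n : ℝ) (hn1 : 2 ≤ n) (hn5 : n ≤ 5) (hβ0 : 0 < β) (hβ : β < 1/20)
    (hM : 1 ≤ M) (h : t * (1-β)^2 < (n-1) * (β * M)) : t < n * β * M := by
  have h1 : (n-1) ≤ n * (1-β)^2 := by
    nlinarith [mul_nonneg hβ0.le (by linarith : (0:ℝ) ≤ 5 - n),
      mul_nonneg (mul_nonneg hβ0.le hβ0.le) (by linarith : (0:ℝ) ≤ n)]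
  have hMb : (0:ℝ) < β * M := mul_pos hβ0 (by linarith)
  have h2 : (n-1) * (β * M) ≤ n * (1-β)^2 * (β * M) :=
    mul_le_mul_of_nonneg_right h1 hMb.le
  have key : t * (1-β)^2 < n * β * M * (1-β)^2 := by nlinarith
  exact lt_of_mul_lt_mul_right key (by positivity)

lemma chain2 (a0 a1 s0 t β : ℝ)
    (ha0 : 1 ≤ a0) (ha1 : 1 ≤ a1)
    (hβ0 : 0 < β) (hβ : β < 1/20)
    (hs0 : s0 < β * max a0 a1)
    (hd0 : a1 ≤ a0 + s0) (hd0' : a0 ≤ a1 + s0)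
    (ht : t ≤ s0) :
    t < 2 * β * max a0 a1 := by
  have hMpos : (0:ℝ) < max a0 a1 := lt_of_lt_of_le one_pos (le_trans ha0 (le_max_left _ _))
  nlinarith [mul_pos hβ0 hMpos]

lemma chain3 (a0 a1 a2 s0 s1 t β : ℝ)
    (ha0 : 1 ≤ a0) (ha1 : 1 ≤ a1) (ha2 : 1 ≤ a2)
    (hβ0 : 0 < β) (hβ : β < 1/20)
    (hs0 : s0 < β * max a0 a1) (hs1 : s1 < β * max a1 a2)
    (hd0 : a1 ≤ a0 + s0) (hd0' : a0 ≤ a1 + s0)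
    (hd1 : a2 ≤ a1 + s1) (hd1' : a1 ≤ a2 + s1)
    (ht : t ≤ s0 + s1) :
    t < 3 * β * max a0 a2 := by
  have hβ1 : β < 1 := by linarith
  have hc : (0:ℝ) < 1 - β := by linarith
  have r10 : a1 * (1-β) < a0 :=
    (aux_ratio a0 a1 s0 β (by linarith) (by linarith) hβ0 hβ1 hs0 hd0 hd0').1
  have hM0 : a0 ≤ max a0 a2 := le_max_left _ _
  have hM2 : a2 ≤ max a0 a2 := le_max_right _ _
  have hM1 : (1:ℝ) ≤ max a0 a2 := le_trans ha0 hM0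
  have b0 := aux_b0 a0 (max a0 a2) β (by linarith) hβ0.le (by linarith) hM0
  have b2 := aux_b0 a2 (max a0 a2) β (by linarith) hβ0.le (by linarith) hM2
  have b1 := aux_b1 a1 a0 (max a0 a2) β hβ0.le hc r10 hM0 (by linarith)
  have S0 := aux_edge a0 a1 s0 β _ hβ0 hβ1 hs0 b0 b1
  have S1 := aux_edge a1 a2 s1 β _ hβ0 hβ1 hs1 b1 b2
  have e1 : t * (1-β)^2 ≤ (s0 + s1) * (1-β)^2 :=
    mul_le_mul_of_nonneg_right ht (by positivity)
  exact aux_final t β (max a0 a2) 3 (by norm_num) (by norm_num) hβ0 hβ hM1 (by nlinarith)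

lemma chain4 (a0 a1 a2 a3 s0 s1 s2 t β : ℝ)
    (ha0 : 1 ≤ a0) (ha1 : 1 ≤ a1) (ha2 : 1 ≤ a2) (ha3 : 1 ≤ a3)
    (hβ0 : 0 < β) (hβ : β < 1/20)
    (hs0 : s0 < β * max a0 a1) (hs1 : s1 < β * max a1 a2)
    (hs2 : s2 < β * max a2 a3)
    (hd0 : a1 ≤ a0 + s0) (hd0' : a0 ≤ a1 + s0)
    (hd1 : a2 ≤ a1 + s1) (hd1' : a1 ≤ a2 + s1)
    (hd2 : a3 ≤ a2 + s2) (hd2' : a2 ≤ a3 + s2)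
    (ht : t ≤ s0 + s1 + s2) :
    t < 4 * β * max a0 a3 := by
  have hβ1 : β < 1 := by linarith
  have hc : (0:ℝ) < 1 - β := by linarith
  have r10 : a1 * (1-β) < a0 :=
    (aux_ratio a0 a1 s0 β (by linarith) (by linarith) hβ0 hβ1 hs0 hd0 hd0').1
  have r23 : a2 * (1-β) < a3 :=
    (aux_ratio a2 a3 s2 β (by linarith) (by linarith) hβ0 hβ1 hs2 hd2 hd2').2
  have hM0 : a0 ≤ max a0 a3 := le_max_left _ _
  have hM3 : a3 ≤ max a0 a3 := le_max_right _ _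
  have hM1 : (1:ℝ) ≤ max a0 a3 := le_trans ha0 hM0
  have b0 := aux_b0 a0 (max a0 a3) β (by linarith) hβ0.le (by linarith) hM0
  have b3 := aux_b0 a3 (max a0 a3) β (by linarith) hβ0.le (by linarith) hM3
  have b1 := aux_b1 a1 a0 (max a0 a3) β hβ0.le hc r10 hM0 (by linarith)
  have b2 := aux_b1 a2 a3 (max a0 a3) β hβ0.le hc r23 hM3 (by linarith)
  have S0 := aux_edge a0 a1 s0 β _ hβ0 hβ1 hs0 b0 b1
  have S1 := aux_edge a1 a2 s1 β _ hβ0 hβ1 hs1 b1 b2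
  have S2 := aux_edge a2 a3 s2 β _ hβ0 hβ1 hs2 b2 b3
  have e1 : t * (1-β)^2 ≤ (s0 + s1 + s2) * (1-β)^2 :=
    mul_le_mul_of_nonneg_right ht (by positivity)
  exact aux_final t β (max a0 a3) 4 (by norm_num) (by norm_num) hβ0 hβ hM1 (by nlinarith)

lemma chain5 (a0 a1 a2 a3 a4 s0 s1 s2 s3 t β : ℝ)
    (ha0 : 1 ≤ a0) (ha1 : 1 ≤ a1) (ha2 : 1 ≤ a2) (ha3 : 1 ≤ a3) (ha4 : 1 ≤ a4)
    (hβ0 : 0 < β) (hβ : β < 1/20)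
    (hs0 : s0 < β * max a0 a1) (hs1 : s1 < β * max a1 a2)
    (hs2 : s2 < β * max a2 a3) (hs3 : s3 < β * max a3 a4)
    (hd0 : a1 ≤ a0 + s0) (hd0' : a0 ≤ a1 + s0)
    (hd1 : a2 ≤ a1 + s1) (hd1' : a1 ≤ a2 + s1)
    (hd2 : a3 ≤ a2 + s2) (hd2' : a2 ≤ a3 + s2)
    (hd3 : a4 ≤ a3 + s3) (hd3' : a3 ≤ a4 + s3)
    (ht : t ≤ s0 + s1 + s2 + s3) :
    t < 5 * β * max a0 a4 := by
  have hβ1 : β < 1 := by linarith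
  have hc : (0:ℝ) < 1 - β := by linarith
  have r10 : a1 * (1-β) < a0 :=
    (aux_ratio a0 a1 s0 β (by linarith) (by linarith) hβ0 hβ1 hs0 hd0 hd0').1
  have r21 : a2 * (1-β) < a1 :=
    (aux_ratio a1 a2 s1 β (by linarith) (by linarith) hβ0 hβ1 hs1 hd1 hd1').1
  have r34 : a3 * (1-β) < a4 :=
    (aux_ratio a3 a4 s3 β (by linarith) (by linarith) hβ0 hβ1 hs3 hd3 hd3').2
  have hM0 : a0 ≤ max a0 a4 := le_max_left _ _
  have hM4 : a4 ≤ max a0 a4 := le_max_right _ _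
  have hM1 : (1:ℝ) ≤ max a0 a4 := le_trans ha0 hM0
  have b0 := aux_b0 a0 (max a0 a4) β (by linarith) hβ0.le (by linarith) hM0
  have b4 := aux_b0 a4 (max a0 a4) β (by linarith) hβ0.le (by linarith) hM4
  have b1 := aux_b1 a1 a0 (max a0 a4) β hβ0.le hc r10 hM0 (by linarith)
  have b3 := aux_b1 a3 a4 (max a0 a4) β hβ0.le hc r34 hM4 (by linarith)
  have b2 := aux_b2 a2 a1 a0 (max a0 a4) β hc r21 r10 hM0
  have S0 := aux_edge a0 a1 s0 β _ hβ0 hβ1 hs0 b0 b1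
  have S1 := aux_edge a1 a2 s1 β _ hβ0 hβ1 hs1 b1 b2
  have S2 := aux_edge a2 a3 s2 β _ hβ0 hβ1 hs2 b2 b3
  have S3 := aux_edge a3 a4 s3 β _ hβ0 hβ1 hs3 b3 b4
  have e1 : t * (1-β)^2 ≤ (s0 + s1 + s2 + s3) * (1-β)^2 :=
    mul_le_mul_of_nonneg_right ht (by positivity)
  exact aux_final t β (max a0 a4) 5 (by norm_num) (by norm_num) hβ0 hβ hM1 (by nlinarith)

/-- a chain of `k ∈ {2,3,4,5}` vertices, consecutive ones in
1-weak agreement, has its endpoints in `k`-weak agreement. -/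
theorem stmt1 {V : Type*} [Fintype V] [DecidableEq V]
    (G : SimpleGraph V) [DecidableRel G.Adj]
    (N : V → Finset V) (hN : ∀ v, N v = insert v (G.neighborFinset v))
    (d : V → ℕ) (hd : ∀ v, d v = (N v).card)
    (β : ℝ) (hβ0 : 0 < β) (hβ : β < 1 / 20)
    (k : ℕ) (hk2 : 2 ≤ k) (hk5 : k ≤ 5)
    (v : Fin k → V)
    (hchain : ∀ i : Fin k, ∀ h : (i : ℕ) + 1 < k,
      ((symmDiff (N (v i)) (N (v ⟨(i : ℕ) + 1, h⟩))).card : ℝ)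
        < β * max (d (v i) : ℝ) (d (v ⟨(i : ℕ) + 1, h⟩) : ℝ)) :
    ((symmDiff (N (v ⟨0, by omega⟩)) (N (v ⟨k - 1, by omega⟩))).card : ℝ)
      < k * β * max (d (v ⟨0, by omega⟩) : ℝ) (d (v ⟨k - 1, by omega⟩) : ℝ) := by
  have hone : ∀ x : V, (1:ℝ) ≤ (d x : ℝ) := by
    intro x
    have h1 : 0 < (N x).card := card_pos.mpr ⟨x, by rw [hN]; exact mem_insert_self _ _⟩
    rw [hd]
    exact_mod_cast h1
  have hdegR : ∀ x y : V, (d x : ℝ) ≤ (d y : ℝ) + ((symmDiff (N x) (N y)).card : ℝ) := by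
    intro x y
    rw [hd x, hd y]
    exact_mod_cast aux_deg (N x) (N y)
  have hdegR' : ∀ x y : V, (d y : ℝ) ≤ (d x : ℝ) + ((symmDiff (N x) (N y)).card : ℝ) := by
    intro x y
    rw [symmDiff_comm]
    exact hdegR y x
  have htriR : ∀ A B C : Finset V,
      ((symmDiff A C).card : ℝ) ≤ ((symmDiff A B).card : ℝ) + ((symmDiff B C).card : ℝ) := by
    intro A B C
    exact_mod_cast aux_tri A B C
  interval_cases k
  · -- k = 2
    have h0 := hchain ⟨0, by norm_num⟩ (by norm_num)
    exact chain2 ((d (v ⟨0, by norm_num⟩) : ℝ)) ((d (v ⟨1, by norm_num⟩) : ℝ)) _ _ β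
      (hone _) (hone _) hβ0 hβ h0 (hdegR' _ _) (hdegR _ _) (le_refl _)
  · -- k = 3
    have h0 := hchain ⟨0, by norm_num⟩ (by norm_num)
    have h1 := hchain ⟨1, by norm_num⟩ (by norm_num)
    have htot : ((symmDiff (N (v ⟨0, by norm_num⟩)) (N (v ⟨2, by norm_num⟩))).card : ℝ)
        ≤ ((symmDiff (N (v ⟨0, by norm_num⟩)) (N (v ⟨1, by norm_num⟩))).card : ℝ)
          + ((symmDiff (N (v ⟨1, by norm_num⟩)) (N (v ⟨2, by norm_num⟩))).card : ℝ) :=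
      htriR _ (N (v ⟨1, by norm_num⟩)) _
    exact chain3 ((d (v ⟨0, by norm_num⟩) : ℝ)) ((d (v ⟨1, by norm_num⟩) : ℝ))
      ((d (v ⟨2, by norm_num⟩) : ℝ)) _ _ _ β
      (hone _) (hone _) (hone _) hβ0 hβ h0 h1
      (hdegR' _ _) (hdegR _ _) (hdegR' _ _) (hdegR _ _) htot
  · -- k = 4
    have h0 := hchain ⟨0, by norm_num⟩ (by norm_num)
    have h1 := hchain ⟨1, by norm_num⟩ (by norm_num)
    have h2 := hchain ⟨2, by norm_num⟩ (by norm_num)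
    have t1 := htriR (N (v ⟨0, by norm_num⟩)) (N (v ⟨1, by norm_num⟩)) (N (v ⟨3, by norm_num⟩))
    have t2 := htriR (N (v ⟨1, by norm_num⟩)) (N (v ⟨2, by norm_num⟩)) (N (v ⟨3, by norm_num⟩))
    have htot : ((symmDiff (N (v ⟨0, by norm_num⟩)) (N (v ⟨3, by norm_num⟩))).card : ℝ)
        ≤ ((symmDiff (N (v ⟨0, by norm_num⟩)) (N (v ⟨1, by norm_num⟩))).card : ℝ)
          + ((symmDiff (N (v ⟨1, by norm_num⟩)) (N (v ⟨2, by norm_num⟩))).card : ℝ)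
          + ((symmDiff (N (v ⟨2, by norm_num⟩)) (N (v ⟨3, by norm_num⟩))).card : ℝ) := by
      linarith
    exact chain4 ((d (v ⟨0, by norm_num⟩) : ℝ)) ((d (v ⟨1, by norm_num⟩) : ℝ))
      ((d (v ⟨2, by norm_num⟩) : ℝ)) ((d (v ⟨3, by norm_num⟩) : ℝ)) _ _ _ _ β
      (hone _) (hone _) (hone _) (hone _) hβ0 hβ h0 h1 h2
      (hdegR' _ _) (hdegR _ _) (hdegR' _ _) (hdegR _ _) (hdegR' _ _) (hdegR _ _) htot
  · -- k = 5
    have h0 := hchain ⟨0, by norm_num⟩ (by norm_num)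
    have h1 := hchain ⟨1, by norm_num⟩ (by norm_num)
    have h2 := hchain ⟨2, by norm_num⟩ (by norm_num)
    have h3 := hchain ⟨3, by norm_num⟩ (by norm_num)
    have t1 := htriR (N (v ⟨0, by norm_num⟩)) (N (v ⟨1, by norm_num⟩)) (N (v ⟨4, by norm_num⟩))
    have t2 := htriR (N (v ⟨1, by norm_num⟩)) (N (v ⟨2, by norm_num⟩)) (N (v ⟨4, by norm_num⟩))
    have t3 := htriR (N (v ⟨2, by norm_num⟩)) (N (v ⟨3, by norm_num⟩)) (N (v ⟨4, by norm_num⟩))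
    have htot : ((symmDiff (N (v ⟨0, by norm_num⟩)) (N (v ⟨4, by norm_num⟩))).card : ℝ)
        ≤ ((symmDiff (N (v ⟨0, by norm_num⟩)) (N (v ⟨1, by norm_num⟩))).card : ℝ)
          + ((symmDiff (N (v ⟨1, by norm_num⟩)) (N (v ⟨2, by norm_num⟩))).card : ℝ)
          + ((symmDiff (N (v ⟨2, by norm_num⟩)) (N (v ⟨3, by norm_num⟩))).card : ℝ)
          + ((symmDiff (N (v ⟨3, by norm_num⟩)) (N (v ⟨4, by norm_num⟩))).card : ℝ) := by
      linarith
    exact chain5 ((d (v ⟨0, by norm_num⟩) : ℝ)) ((d (v ⟨1, by norm_num⟩) : ℝ))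
      ((d (v ⟨2, by norm_num⟩) : ℝ)) ((d (v ⟨3, by norm_num⟩) : ℝ)) ((d (v ⟨4, by norm_num⟩) : ℝ))
      _ _ _ _ _ β
      (hone _) (hone _) (hone _) (hone _) (hone _) hβ0 hβ h0 h1 h2 h3
      (hdegR' _ _) (hdegR _ _) (hdegR' _ _) (hdegR _ _) (hdegR' _ _) (hdegR _ _)
      (hdegR' _ _) (hdegR _ _) htot
end

section
/- Suppose 5β + 2λ < 1, β < 1/20. In the sparsified graph G̃ (obtained from G by deleting all edges whose endpoints are not in agreement, then deleting all edges between two light vertices), if u and v are two heavy vertices in the same connected component of G̃, then dist_{G̃}(u, v) ≤ 2. -/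
/-!
Every edge of `G̃` has a heavy endpoint, so along a shortest path between heavy vertices one of
any two consecutive inner vertices is heavy; by induction on the distance it suffices to treat
heavy `u`, `v` joined in `G̃` by a walk of length at most `4`. Along an agreement edge the closed
neighbourhoods differ by less than `β / (1 - β)` times the degree, so splitting the walk in two
halves gives `|N(u) △ N(v)| ≤ 5β/2 · (d(u) + d(v))`. The heavy vertices `u` and `v` lose at
most `λ d(u) + λ d(v)` neighbours in `G̃`, and `5β + 2λ < 1` leaves them a common closed
neighbour.
-/

open Finset Classical

noncomputable section

variable {V : Type*} [Fintype V] [DecidableEq V]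

/-- Closed neighborhood of `v` in `G` (each vertex is its own neighbor). -/
def closedNbhd (G : SimpleGraph V) (v : V) : Finset V :=
  insert v (G.neighborFinset v)

/-- Degree `d(v) = |N(v)|` (closed neighborhoods). -/
def deg (G : SimpleGraph V) (v : V) : ℕ := (closedNbhd G v).card

/-- `u` and `v` are in agreement: `|N(u) △ N(v)| < β·max(d(u), d(v))`. -/
def Agree (β : ℝ) (G : SimpleGraph V) (u v : V) : Prop :=
  ((symmDiff (closedNbhd G u) (closedNbhd G v)).card : ℝ)
    < β * max (deg G u : ℝ) (deg G v : ℝ)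

/-- The graph after Line 1: discard all edges whose endpoints are not in agreement. -/
def agreeGraph (β : ℝ) (G : SimpleGraph V) : SimpleGraph V where
  Adj u v := G.Adj u v ∧ Agree β G u v
  symm := by
    constructor
    intro a b h
    refine ⟨h.1.symm, ?_⟩
    have := h.2
    unfold Agree at *
    rwa [symmDiff_comm, max_comm] at this
  loopless := ⟨fun a h => G.loopless.irrefl a h.1⟩

/-- A vertex is light if it lost more than a `λ`-fraction of its neighbors
when passing from `G` to the agreement graph. -/
def Light (β lam : ℝ) (G : SimpleGraph V) (v : V) : Prop :=
  (deg G v : ℝ) - (deg (agreeGraph β G) v : ℝ) > lam * (deg G v : ℝ)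

/-- A vertex is heavy if it is not light. -/
def Heavy (β lam : ℝ) (G : SimpleGraph V) (v : V) : Prop := ¬ Light β lam G v

/-- The sparsified graph `G̃`: additionally discard all edges between two
light vertices. -/
def sparsified (β lam : ℝ) (G : SimpleGraph V) : SimpleGraph V where
  Adj u v := (agreeGraph β G).Adj u v ∧ (Heavy β lam G u ∨ Heavy β lam G v)
  symm := ⟨fun a b h => ⟨h.1.symm, h.2.symm⟩⟩
  loopless := ⟨fun a h => (agreeGraph β G).loopless.irrefl a h.1⟩

theorem SimpleGraph.Walk.exists_split_of_length_le_add {α : Type*} {G : SimpleGraph α}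
    {u v : α} (p : G.Walk u v) {m n : ℕ} (hp : p.length ≤ m + n) :
    ∃ w, ∃ (q : G.Walk u w) (r : G.Walk w v), q.length ≤ m ∧ r.length ≤ n := by
  induction p generalizing m with
  | nil => exact ⟨_, .nil, .nil, by simp, by simp⟩
  | cons h p ih =>
    cases m with
    | zero => exact ⟨_, .nil, .cons h p, by simp, by simpa using hp⟩
    | succ m =>
      obtain ⟨w, q, r, hq, hr⟩ := ih (m := m) (by simp only [Walk.length_cons] at hp; omega)
      exact ⟨w, .cons h q, r, by simpa using hq, hr⟩

theorem SimpleGraph.IsVertexCover.dist_le_two {α : Type*} {S : SimpleGraph α} {c : Set α}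
    (hc : S.IsVertexCover c)
    (hshort : ∀ u ∈ c, ∀ v ∈ c, ∀ p : S.Walk u v, p.length ≤ 4 → S.dist u v ≤ 2)
    {u v : α} (hu : u ∈ c) (hv : v ∈ c) (huv : S.Reachable u v) : S.dist u v ≤ 2 := by
  induction hn : S.dist u v using Nat.strong_induction_on generalizing u with
  | _ n ih =>
  subst hn
  obtain ⟨p, hp⟩ := huv.exists_walk_length_eq_dist
  rcases p with _ | @⟨_, x₁, _, h₁, _ | @⟨_, x₂, _, h₂, q⟩⟩
  · exact hshort _ hu _ hv .nil (by simp)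
  · exact hshort _ hu _ hv (.cons h₁ .nil) (by simp)
  · simp only [Walk.length_cons] at hp
    rcases hc h₂ with hx | hx
    · have hxv : S.dist x₁ v ≤ 2 := by
        refine ih _ ?_ hx ⟨.cons h₂ q⟩ rfl
        have := dist_le (.cons h₂ q)
        rw [Walk.length_cons] at this
        omega
      obtain ⟨r, hr⟩ := (Walk.reachable (.cons h₂ q)).exists_walk_length_eq_dist
      exact hshort u hu v hv (.cons h₁ r) (by simp; omega)
    · have hxv : S.dist x₂ v ≤ 2 := ih _ (by have := dist_le q; omega) hx ⟨q⟩ rfl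
      obtain ⟨r, hr⟩ := q.reachable.exists_walk_length_eq_dist
      exact hshort u hu v hv (.cons h₁ (.cons h₂ r)) (by simp; omega)

section

variable {G H : SimpleGraph V} {β lam : ℝ} {a b c u v x : V}

lemma mem_closedNbhd : x ∈ closedNbhd G a ↔ x = a ∨ G.Adj a x := by
  simp [closedNbhd]

lemma closedNbhd_mono (h : H ≤ G) (a : V) : closedNbhd H a ⊆ closedNbhd G a := by
  intro x hx
  rw [mem_closedNbhd] at hx ⊢
  exact hx.imp_right (@h a x)

lemma one_le_deg (G : SimpleGraph V) (a : V) : 1 ≤ deg G a :=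
  card_pos.mpr ⟨a, mem_closedNbhd.mpr (.inl rfl)⟩

lemma exists_walk_length_le_one_of_mem_closedNbhd (h : x ∈ closedNbhd G a) :
    ∃ p : G.Walk a x, p.length ≤ 1 := by
  rcases mem_closedNbhd.mp h with rfl | hadj
  · exact ⟨.nil, by simp⟩
  · exact ⟨hadj.toWalk, by simp⟩

lemma dist_le_two_of_mem_closedNbhd (hu : x ∈ closedNbhd G u) (hv : x ∈ closedNbhd G v) :
    G.dist u v ≤ 2 := by
  obtain ⟨p, hp⟩ := exists_walk_length_le_one_of_mem_closedNbhd hu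
  obtain ⟨q, hq⟩ := exists_walk_length_le_one_of_mem_closedNbhd hv
  calc G.dist u v ≤ (p.append q.reverse).length := SimpleGraph.dist_le _
    _ ≤ 2 := by simp only [SimpleGraph.Walk.length_append, SimpleGraph.Walk.length_reverse]; omega

def nbhdDist (G : SimpleGraph V) (a b : V) : ℕ :=
  #(symmDiff (closedNbhd G a) (closedNbhd G b))

lemma agree_iff : Agree β G a b ↔ (nbhdDist G a b : ℝ) < β * max (deg G a : ℝ) (deg G b) :=
  Iff.rfl

lemma nbhdDist_comm (G : SimpleGraph V) (a b : V) : nbhdDist G a b = nbhdDist G b a := by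
  rw [nbhdDist, symmDiff_comm, nbhdDist]

lemma nbhdDist_self (G : SimpleGraph V) (a : V) : nbhdDist G a a = 0 := by
  simp [nbhdDist]

lemma nbhdDist_triangle (G : SimpleGraph V) (a b c : V) :
    nbhdDist G a c ≤ nbhdDist G a b + nbhdDist G b c :=
  (card_le_card (symmDiff_triangle _ _ _)).trans (card_union_le _ _)

lemma deg_le_deg_add_nbhdDist (G : SimpleGraph V) (a b : V) :
    deg G b ≤ deg G a + nbhdDist G a b := by
  rw [nbhdDist_comm]
  exact (card_le_card (le_symmDiff_sup_right _ _)).trans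
    ((card_union_le _ _).trans_eq (add_comm _ _))

lemma max_deg_le_card_inter_add_nbhdDist (G : SimpleGraph V) (a b : V) :
    max (deg G a) (deg G b) ≤ #(closedNbhd G a ∩ closedNbhd G b) + nbhdDist G a b := by
  have h : closedNbhd G a ∪ closedNbhd G b
      = (closedNbhd G a ∩ closedNbhd G b) ∪ symmDiff (closedNbhd G a) (closedNbhd G b) :=
    (inf_sup_symmDiff _ _).symm
  have hunion : #(closedNbhd G a ∪ closedNbhd G b)
      ≤ #(closedNbhd G a ∩ closedNbhd G b) + nbhdDist G a b :=
    h ▸ card_union_le _ _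
  exact max_le ((card_le_card subset_union_left).trans hunion)
    ((card_le_card subset_union_right).trans hunion)

lemma Agree.pos (h : Agree β G a b) : 0 < β :=
  pos_of_mul_pos_left ((agree_iff.mp h).trans_le' (Nat.cast_nonneg _)) (by positivity)

lemma Agree.refl (hβ : 0 < β) (G : SimpleGraph V) (a : V) : Agree β G a a := by
  rw [agree_iff, nbhdDist_self, max_self, Nat.cast_zero]
  exact mul_pos hβ (Nat.cast_pos.mpr (one_le_deg G a))

/-- As `d(b) ≤ d(a) + s` for `s = |N(a) △ N(b)|`, agreement gives `s < β (d(a) + s)`,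
i.e. `s < β / (1 - β) · d(a)`, and `β / (1 - β) < 20β/19`. -/
lemma Agree.nbhdDist_lt (hβ : β < 1 / 20) (h : Agree β G a b) :
    (nbhdDist G a b : ℝ) < 20 / 19 * β * deg G a := by
  have hs : (0 : ℝ) ≤ nbhdDist G a b := Nat.cast_nonneg _
  have hmax : max (deg G a : ℝ) (deg G b) ≤ deg G a + nbhdDist G a b :=
    max_le (by linarith) (by exact_mod_cast deg_le_deg_add_nbhdDist G a b)
  have := (agree_iff.mp h).trans_le (mul_le_mul_of_nonneg_left hmax h.pos.le)
  nlinarith [mul_nonneg hs (sub_nonneg.mpr hβ.le)]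

/-- With `k = 20β/19 < 1/19`:
`s(a,c) < k d(a) + k (d(a) + s(a,b)) < (2 + 1/19) k d(a) ≤ 5β/2 · d(a)`. -/
lemma nbhdDist_lt_of_agree_of_agree (hβ : β < 1 / 20) (hab : Agree β G a b)
    (hbc : Agree β G b c) : (nbhdDist G a c : ℝ) < 5 / 2 * β * deg G a := by
  have hβ0 := hab.pos
  have htri : (nbhdDist G a c : ℝ) ≤ nbhdDist G a b + nbhdDist G b c := by
    exact_mod_cast nbhdDist_triangle G a b c
  have hdeg : (deg G b : ℝ) ≤ deg G a + nbhdDist G a b := by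
    exact_mod_cast deg_le_deg_add_nbhdDist G a b
  have hab' := hab.nbhdDist_lt hβ
  have hbc' := hbc.nbhdDist_lt hβ
  have hda : (0 : ℝ) ≤ deg G a := Nat.cast_nonneg _
  nlinarith [mul_le_mul_of_nonneg_left hdeg hβ0.le, mul_nonneg hda hβ0.le,
    mul_le_mul_of_nonneg_left hab'.le (sub_nonneg.mpr hβ.le)]

lemma nbhdDist_le_of_walk_length_le_two (hβ0 : 0 < β) (hβ : β < 1 / 20)
    (p : (agreeGraph β G).Walk a b) (hp : p.length ≤ 2) :
    (nbhdDist G a b : ℝ) ≤ 5 / 2 * β * deg G a := by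
  obtain ⟨c, hac, hcb⟩ : ∃ c, Agree β G a c ∧ Agree β G c b := by
    rcases p with _ | ⟨h, _ | ⟨h', _ | ⟨_, _⟩⟩⟩
    · exact ⟨a, .refl hβ0 G a, .refl hβ0 G a⟩
    · exact ⟨a, .refl hβ0 G a, h.2⟩
    · exact ⟨_, h.2, h'.2⟩
    · simp at hp
  exact (nbhdDist_lt_of_agree_of_agree hβ hac hcb).le

lemma agreeGraph_le (β : ℝ) (G : SimpleGraph V) : agreeGraph β G ≤ G :=
  fun _ _ h => h.1

lemma sparsified_le_agreeGraph (β lam : ℝ) (G : SimpleGraph V) :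
    sparsified β lam G ≤ agreeGraph β G :=
  fun _ _ h => h.1

lemma Heavy.closedNbhd_sparsified (h : Heavy β lam G a) :
    closedNbhd (sparsified β lam G) a = closedNbhd (agreeGraph β G) a := by
  refine (closedNbhd_mono (sparsified_le_agreeGraph β lam G) a).antisymm fun x hx => ?_
  rw [mem_closedNbhd] at hx ⊢
  exact hx.imp_right fun hadj => ⟨hadj, .inl h⟩

lemma Heavy.card_sdiff_closedNbhd_sparsified_le (h : Heavy β lam G a) :
    (#(closedNbhd G a \ closedNbhd (sparsified β lam G) a) : ℝ) ≤ lam * deg G a := by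
  have hsub := closedNbhd_mono (agreeGraph_le β G) a
  rw [h.closedNbhd_sparsified, card_sdiff_of_subset hsub, Nat.cast_sub (card_le_card hsub)]
  exact not_lt.mp h

/-- A common neighbour of `u` and `v` in `G` survives in `G̃` unless it is among the at most
`λ d(u) + λ d(v)` neighbours that `u` or `v` lost. -/
lemma Heavy.dist_sparsified_le_two (hu : Heavy β lam G u) (hv : Heavy β lam G v)
    (h : (nbhdDist G u v : ℝ) + lam * deg G u + lam * deg G v < max (deg G u : ℝ) (deg G v)) :
    (sparsified β lam G).dist u v ≤ 2 := by
  set S := sparsified β lam G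
  obtain ⟨x, hx⟩ : (closedNbhd S u ∩ closedNbhd S v).Nonempty := by
    rw [← card_pos, ← Nat.cast_pos (α := ℝ)]
    have hcover : closedNbhd G u ∩ closedNbhd G v ⊆ (closedNbhd S u ∩ closedNbhd S v)
        ∪ (closedNbhd G u \ closedNbhd S u) ∪ (closedNbhd G v \ closedNbhd S v) := by
      intro x
      simp only [mem_inter, mem_union, mem_sdiff]
      tauto
    have hcard : (#(closedNbhd G u ∩ closedNbhd G v) : ℝ)
        ≤ #(closedNbhd S u ∩ closedNbhd S v) + #(closedNbhd G u \ closedNbhd S u)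
          + #(closedNbhd G v \ closedNbhd S v) := by
      exact_mod_cast (card_le_card hcover).trans
        ((card_union_le _ _).trans (add_le_add_left (card_union_le _ _) _))
    have hmax : max (deg G u : ℝ) (deg G v) ≤ #(closedNbhd G u ∩ closedNbhd G v)
        + nbhdDist G u v := by
      exact_mod_cast max_deg_le_card_inter_add_nbhdDist G u v
    linarith [hu.card_sdiff_closedNbhd_sparsified_le, hv.card_sdiff_closedNbhd_sparsified_le]
  rw [mem_inter] at hx
  exact dist_le_two_of_mem_closedNbhd hx.1 hx.2

lemma Heavy.dist_sparsified_le_two_of_walk (hβ0 : 0 < β) (hβ : β < 1 / 20) (hlam0 : 0 ≤ lam)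
    (hparams : 5 * β + 2 * lam < 1) (hu : Heavy β lam G u) (hv : Heavy β lam G v)
    (p : (sparsified β lam G).Walk u v) (hp : p.length ≤ 4) :
    (sparsified β lam G).dist u v ≤ 2 := by
  obtain ⟨w, q, r, hq, hr⟩ :=
    (p.mapLe (sparsified_le_agreeGraph β lam G)).exists_split_of_length_le_add (m := 2) (n := 2)
      (by simpa using hp)
  have hqw := nbhdDist_le_of_walk_length_le_two hβ0 hβ q hq
  have hrw := nbhdDist_le_of_walk_length_le_two hβ0 hβ r.reverse (by simpa using hr)
  have htri : (nbhdDist G u v : ℝ) ≤ nbhdDist G u w + nbhdDist G v w := by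
    rw [nbhdDist_comm G v w]
    exact_mod_cast nbhdDist_triangle G u w v
  apply hu.dist_sparsified_le_two hv
  have hdu : (deg G u : ℝ) ≤ max (deg G u : ℝ) (deg G v) := le_max_left _ _
  have hdv : (deg G v : ℝ) ≤ max (deg G u : ℝ) (deg G v) := le_max_right _ _
  have hm : (1 : ℝ) ≤ max (deg G u : ℝ) (deg G v) :=
    (Nat.one_le_cast.mpr (one_le_deg G u)).trans hdu
  nlinarith [mul_le_mul_of_nonneg_left hdu (by positivity : (0 : ℝ) ≤ 5 / 2 * β + lam),
    mul_le_mul_of_nonneg_left hdv (by positivity : (0 : ℝ) ≤ 5 / 2 * β + lam)]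

end

/-- if `5β + 2λ < 1`, `β < 1/20`, and `u`, `v` are heavy vertices
in the same connected component of the sparsified graph `G̃`, then
`dist_{G̃}(u,v) ≤ 2`. -/
theorem stmt4 (G : SimpleGraph V) (β lam : ℝ)
    (hβ0 : 0 < β) (hβ : β < 1 / 20) (hlam0 : 0 < lam)
    (hparams : 5 * β + 2 * lam < 1)
    (u v : V)
    (hu : Heavy β lam G u) (hv : Heavy β lam G v)
    (hreach : (sparsified β lam G).Reachable u v) :
    (sparsified β lam G).dist u v ≤ 2 := by
  have hcover : (sparsified β lam G).IsVertexCover {x | Heavy β lam G x} := fun _ _ h => h.2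
  exact hcover.dist_le_two
    (fun _ hx _ hy => Heavy.dist_sparsified_le_two_of_walk hβ0 hβ hlam0.le hparams hx hy)
    hu hv hreach

end
end

section
/- Let CC be a finite set of vertices in a complete signed graph such that every vertex v ∈ CC has at least (1-δ)|CC| positive neighbors inside CC, where δ := 8β + λ ≤ 1/4. Then, for the min-disagree correlation clustering objective restricted to CC, the cost of keeping CC as a single cluster is no larger than the cost of any partition of CC into two or more clusters. -/
open Finset Classical

noncomputable section

variable {V : Type*} [Fintype V] [DecidableEq V]

set_option maxHeartbeats 1000000
set_option linter.unusedSectionVars false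
set_option linter.unusedVariables false

lemma card_filter_prod {α β : Type*} [DecidableEq α] [DecidableEq β]
    (s : Finset α) (t : Finset β) (q : α × β → Prop) [DecidablePred q]
    [∀ u, DecidablePred fun v => q (u, v)] :
    ((s ×ˢ t).filter q).card
      = ∑ u ∈ s, (t.filter (fun v => q (u, v))).card := by
  classical
  rw [Finset.card_eq_sum_card_fiberwise (f := Prod.fst) (t := s)
    (fun p hp => (Finset.mem_product.1 (Finset.mem_filter.1 hp).1).1)]
  refine Finset.sum_congr rfl fun u hu => ?_
  refine Finset.card_bij (fun p _ => p.2) ?_ ?_ ?_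
  · intro p hp
    simp only [Finset.mem_filter, Finset.mem_product] at hp ⊢
    refine ⟨hp.1.1.2, ?_⟩
    have := hp.1.2
    rwa [show p = (u, p.2) from Prod.ext hp.2 rfl] at this
  · intro p hp p' hp' h
    simp only [Finset.mem_filter] at hp hp'
    exact Prod.ext (hp.2.trans hp'.2.symm) h
  · intro v hv
    simp only [Finset.mem_filter] at hv
    exact ⟨(u, v), by simp [Finset.mem_filter, Finset.mem_product, hu, hv.1, hv.2], rfl⟩

lemma core_ineq (G : SimpleGraph V) (δ : ℝ) (hδ0 : 0 ≤ δ) (hδ : δ ≤ 1/4)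
    (CC : Finset V)
    (hmd : ∀ v ∈ CC, ((CC.filter (fun u => u ≠ v ∧ ¬ G.Adj v u)).card : ℝ) ≤ δ * CC.card)
    {κ : Type*} (c : V → κ) :
    ((CC ×ˢ CC).filter (fun p : V × V => p.1 ≠ p.2 ∧ ¬ G.Adj p.1 p.2 ∧ c p.1 ≠ c p.2)).card ≤
    ((CC ×ˢ CC).filter (fun p : V × V => G.Adj p.1 p.2 ∧ c p.1 ≠ c p.2)).card := by
  classical
  set n := CC.card with hn
  set Mc := (CC ×ˢ CC).filter (fun p : V × V => p.1 ≠ p.2 ∧ ¬ G.Adj p.1 p.2 ∧ c p.1 ≠ c p.2)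
    with hMc
  set Pc := (CC ×ˢ CC).filter (fun p : V × V => G.Adj p.1 p.2 ∧ c p.1 ≠ c p.2) with hPc
  set Tc := (CC ×ˢ CC).filter (fun p : V × V => c p.1 ≠ c p.2) with hTc
  have hMcsum : (Mc.card : ℝ)
      = ∑ u ∈ CC, ((CC.filter (fun v => u ≠ v ∧ ¬ G.Adj u v ∧ c u ≠ c v)).card : ℝ) := by
    have : Mc.card = ∑ u ∈ CC, (CC.filter (fun v => u ≠ v ∧ ¬ G.Adj u v ∧ c u ≠ c v)).card :=
      card_filter_prod CC CC (fun p : V × V => p.1 ≠ p.2 ∧ ¬ G.Adj p.1 p.2 ∧ c p.1 ≠ c p.2)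
    rw [this, Nat.cast_sum]
  -- Tc = Pc ∪ Mc, disjointly
  have hsplit : Tc.card = Pc.card + Mc.card := by
    have hunion : Tc = Pc ∪ Mc := by
      rw [hPc, hMc, hTc, ← Finset.filter_or]
      refine Finset.filter_congr fun p hp => ?_
      constructor
      · intro hc
        by_cases h : G.Adj p.1 p.2
        · exact Or.inl ⟨h, hc⟩
        · exact Or.inr ⟨fun he => hc (by rw [he]), h, hc⟩
      · rintro (⟨_, hc⟩ | ⟨_, _, hc⟩) <;> exact hc
    have hdisj : Disjoint Pc Mc := by
      rw [Finset.disjoint_left]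
      intro p hp hq
      have h1 := (Finset.mem_filter.1 hp).2
      have h2 := (Finset.mem_filter.1 hq).2
      exact h2.2.1 h1.1
    rw [hunion, Finset.card_union_of_disjoint hdisj]
  -- per-vertex bound on minus-cut degree
  have hfib : ∀ u ∈ CC,
      ((CC.filter (fun v => u ≠ v ∧ ¬ G.Adj u v ∧ c u ≠ c v)).card : ℝ) ≤ δ * n := by
    intro u hu
    refine le_trans ?_ (hmd u hu)
    have hsub : CC.filter (fun v => u ≠ v ∧ ¬ G.Adj u v ∧ c u ≠ c v)
        ⊆ CC.filter (fun v => v ≠ u ∧ ¬ G.Adj u v) := by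
      intro v hv
      simp only [Finset.mem_filter] at hv ⊢
      exact ⟨hv.1, hv.2.1.symm, hv.2.2.1⟩
    exact_mod_cast Finset.card_le_card hsub
  -- key: 2 * Mc.card ≤ Tc.card
  have hkey : 2 * Mc.card ≤ Tc.card := by
    by_cases hbig : ∃ u₀ ∈ CC, (n : ℝ) < 2 * ((CC.filter (fun w => c w = c u₀)).card : ℝ)
    · obtain ⟨u₀, hu₀, hb⟩ := hbig
      set A := CC.filter (fun w => c w = c u₀) with hA
      set a := A.card with ha
      set m := (CC \ A).card with hm
      have hMsplit : Mc.card = (Mc.filter (fun p => p.1 ∈ A)).card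
          + (Mc.filter (fun p => p.1 ∉ A)).card :=
        (Finset.card_filter_add_card_filter_not (p := fun p : V × V => p.1 ∈ A)).symm
      have hswap : (Mc.filter (fun p => p.1 ∈ A)).card ≤ (Mc.filter (fun p => p.1 ∉ A)).card := by
        refine Finset.card_le_card_of_injOn Prod.swap ?_
          (fun p _ p' _ h => Prod.swap_injective h)
        intro p hp
        obtain ⟨hpM, hp1A⟩ := Finset.mem_filter.1 hp
        obtain ⟨hpp, hrest⟩ := Finset.mem_filter.1 hpM
        obtain ⟨hne, hadj, hcut⟩ := hrest
        obtain ⟨h1, h2⟩ := Finset.mem_product.1 hpp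
        have hc1 : c p.1 = c u₀ := (Finset.mem_filter.1 hp1A).2
        refine Finset.mem_filter.2 ⟨Finset.mem_filter.2 ⟨Finset.mem_product.2 ⟨h2, h1⟩,
          hne.symm, fun h => hadj h.symm, fun h => hcut h.symm⟩, ?_⟩
        intro hmem
        exact hcut (hc1.trans ((Finset.mem_filter.1 hmem).2).symm)
      have hout : ((Mc.filter (fun p => p.1 ∉ A)).card : ℝ) ≤ m * (δ * n) := by
        have hsub : Mc.filter (fun p => p.1 ∉ A) ⊆
            ((CC \ A) ×ˢ CC).filter
              (fun p : V × V => p.1 ≠ p.2 ∧ ¬ G.Adj p.1 p.2 ∧ c p.1 ≠ c p.2) := by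
          intro p hp
          obtain ⟨hpM, hp1A⟩ := Finset.mem_filter.1 hp
          obtain ⟨hpp, hrest⟩ := Finset.mem_filter.1 hpM
          obtain ⟨h1, h2⟩ := Finset.mem_product.1 hpp
          exact Finset.mem_filter.2 ⟨Finset.mem_product.2
            ⟨Finset.mem_sdiff.2 ⟨h1, hp1A⟩, h2⟩, hrest⟩
        have hcards : (((CC \ A) ×ˢ CC).filter
              (fun p : V × V => p.1 ≠ p.2 ∧ ¬ G.Adj p.1 p.2 ∧ c p.1 ≠ c p.2)).card
            = ∑ u ∈ CC \ A, (CC.filter (fun v => u ≠ v ∧ ¬ G.Adj u v ∧ c u ≠ c v)).card :=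
          card_filter_prod (CC \ A) CC (fun p : V × V => p.1 ≠ p.2 ∧ ¬ G.Adj p.1 p.2 ∧ c p.1 ≠ c p.2)
        calc ((Mc.filter (fun p => p.1 ∉ A)).card : ℝ)
            ≤ ((((CC \ A) ×ˢ CC).filter
              (fun p : V × V => p.1 ≠ p.2 ∧ ¬ G.Adj p.1 p.2 ∧ c p.1 ≠ c p.2)).card : ℝ) := by
              exact_mod_cast Finset.card_le_card hsub
          _ = ∑ u ∈ CC \ A, ((CC.filter (fun v => u ≠ v ∧ ¬ G.Adj u v ∧ c u ≠ c v)).card : ℝ) := by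
              rw [hcards, Nat.cast_sum]
          _ ≤ ∑ _u ∈ CC \ A, δ * n :=
              Finset.sum_le_sum fun u hu => hfib u (Finset.mem_sdiff.1 hu).1
          _ = m * (δ * n) := by rw [Finset.sum_const, nsmul_eq_mul]
      -- Tc.card ≥ a*m + m*a
      have hTlow : a * m + m * a ≤ Tc.card := by
        have hsub : (A ×ˢ (CC \ A)) ∪ ((CC \ A) ×ˢ A) ⊆ Tc := by
          intro p hp
          rcases Finset.mem_union.1 hp with hp | hp
          · obtain ⟨h1A, h2s⟩ := Finset.mem_product.1 hp
            obtain ⟨h2, h2A⟩ := Finset.mem_sdiff.1 h2s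
            obtain ⟨h1, hc1⟩ := Finset.mem_filter.1 h1A
            refine Finset.mem_filter.2 ⟨Finset.mem_product.2 ⟨h1, h2⟩, fun h => h2A ?_⟩
            exact Finset.mem_filter.2 ⟨h2, h ▸ hc1⟩
          · obtain ⟨h1s, h2A'⟩ := Finset.mem_product.1 hp
            obtain ⟨h1, h1A⟩ := Finset.mem_sdiff.1 h1s
            obtain ⟨h2, hc2⟩ := Finset.mem_filter.1 h2A'
            refine Finset.mem_filter.2 ⟨Finset.mem_product.2 ⟨h1, h2⟩, fun h => h1A ?_⟩
            exact Finset.mem_filter.2 ⟨h1, h ▸ hc2⟩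
        have hdisj : Disjoint (A ×ˢ (CC \ A)) ((CC \ A) ×ˢ A) := by
          rw [Finset.disjoint_left]
          intro p hp hq
          have h1 := (Finset.mem_product.1 hp).1
          have h2 := (Finset.mem_product.1 hq).1
          exact (Finset.mem_sdiff.1 h2).2 h1
        calc a * m + m * a
            = ((A ×ˢ (CC \ A)) ∪ ((CC \ A) ×ˢ A)).card := by
              rw [Finset.card_union_of_disjoint hdisj, Finset.card_product,
                Finset.card_product]
          _ ≤ Tc.card := Finset.card_le_card hsub
      -- combine over ℝ
      have hMnat : Mc.card ≤ 2 * (Mc.filter (fun p => p.1 ∉ A)).card := by omega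
      have hMreal : (Mc.card : ℝ) ≤ 2 * (m * (δ * n)) := by
        have h1 : (Mc.card : ℝ) ≤ 2 * ((Mc.filter (fun p => p.1 ∉ A)).card : ℝ) := by
          exact_mod_cast hMnat
        linarith [hout]
      have hTreal : (a : ℝ) * m + m * a ≤ (Tc.card : ℝ) := by exact_mod_cast hTlow
      have hmn : (0:ℝ) ≤ m := Nat.cast_nonneg m
      have hnn : (0:ℝ) ≤ n := Nat.cast_nonneg n
      have e1 : (m : ℝ) * (δ * n) ≤ m * (n / 4) :=
        mul_le_mul_of_nonneg_left (by nlinarith) hmn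
      have e2 : (m : ℝ) * n ≤ m * (2 * a) := mul_le_mul_of_nonneg_left hb.le hmn
      have : (2 * (Mc.card:ℝ)) ≤ (Tc.card : ℝ) := by linarith [hMreal, hTreal, e1, e2]
      exact_mod_cast this
    · push_neg at hbig
      have hTsum : (Tc.card : ℝ) = ∑ u ∈ CC, ((CC.filter (fun v => c u ≠ c v)).card : ℝ) := by
        have : Tc.card = ∑ u ∈ CC, (CC.filter (fun v => c u ≠ c v)).card :=
          card_filter_prod CC CC (fun p : V × V => c p.1 ≠ c p.2)
        rw [this, Nat.cast_sum]
      have hTlow : (n : ℝ) * (n / 2) ≤ (Tc.card : ℝ) := by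
        rw [hTsum]
        have hub : ∀ u ∈ CC, (n : ℝ) / 2 ≤ ((CC.filter (fun v => c u ≠ c v)).card : ℝ) := by
          intro u hu
          have hb := hbig u hu
          have hcompl : CC.filter (fun v => c u ≠ c v) = CC \ CC.filter (fun w => c w = c u) := by
            ext v
            simp only [Finset.mem_filter, Finset.mem_sdiff, not_and]
            constructor
            · rintro ⟨hv, hne⟩; exact ⟨hv, fun _ he => hne he.symm⟩
            · rintro ⟨hv, h⟩; exact ⟨hv, fun he => h hv he.symm⟩
          have hle : (CC.filter (fun w => c w = c u)).card ≤ n :=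
            Finset.card_le_card (Finset.filter_subset _ _)
          have hcard : (CC.filter (fun v => c u ≠ c v)).card
              = n - (CC.filter (fun w => c w = c u)).card := by
            rw [hcompl, Finset.card_sdiff_of_subset (Finset.filter_subset _ _)]
          rw [hcard, Nat.cast_sub hle]
          linarith
        calc (n : ℝ) * (n / 2) = ∑ _u ∈ CC, (n : ℝ) / 2 := by
              rw [Finset.sum_const, nsmul_eq_mul]
          _ ≤ _ := Finset.sum_le_sum hub
      have hMhigh : (Mc.card : ℝ) ≤ n * (δ * n) := by
        rw [hMcsum]
        calc ∑ u ∈ CC, ((CC.filter (fun v => u ≠ v ∧ ¬ G.Adj u v ∧ c u ≠ c v)).card : ℝ)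
            ≤ ∑ _u ∈ CC, δ * n := Finset.sum_le_sum hfib
          _ = n * (δ * n) := by rw [Finset.sum_const, nsmul_eq_mul]
      have hnn : (0:ℝ) ≤ n := Nat.cast_nonneg n
      have e3 : δ * ((n:ℝ) * n) ≤ (1/4) * ((n:ℝ) * n) :=
        mul_le_mul_of_nonneg_right hδ (mul_nonneg hnn hnn)
      have : (2 * (Mc.card:ℝ)) ≤ (Tc.card : ℝ) := by linarith [hMhigh, hTlow, e3]
      exact_mod_cast this
  omega



/-- Min-disagree correlation clustering cost of the clustering `c`, restricted to
pairs of vertices inside `S`, for the complete signed instance whose `+` edges are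
the edges of `G` (all other pairs are `−`): number of `+` edges inside `S` cut by
`c` plus number of `−` pairs inside `S` not cut by `c`. -/
def costOn (G : SimpleGraph V) (S : Finset V) {κ : Type*} (c : V → κ) : ℕ :=
  ((S ×ˢ S).filter (fun p : V × V => p.1 ≠ p.2 ∧
    ((G.Adj p.1 p.2 ∧ c p.1 ≠ c p.2) ∨ (¬ G.Adj p.1 p.2 ∧ c p.1 = c p.2)))).card / 2

/-- Number of `+` edges inside `S` cut by the clustering `c`. -/
def cutCount (G : SimpleGraph V) (S : Finset V) {κ : Type*} (c : V → κ) : ℕ :=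
  ((S ×ˢ S).filter (fun p : V × V => G.Adj p.1 p.2 ∧ c p.1 ≠ c p.2)).card / 2

/-- Number of `−` pairs (non-adjacent pairs of distinct vertices) inside `S`. -/
def minusCount (G : SimpleGraph V) (S : Finset V) : ℕ :=
  ((S ×ˢ S).filter (fun p : V × V => p.1 ≠ p.2 ∧ ¬ G.Adj p.1 p.2)).card / 2

/-- if every vertex of `CC` has at least `(1-δ)|CC|` positive
neighbors inside `CC`, where `δ = 8β + λ ≤ 1/4`, then keeping `CC` as a single
cluster costs no more than any partition of `CC` into two or more clusters. -/
theorem stmt9 (G : SimpleGraph V) (β lam : ℝ) (hβ0 : 0 < β) (hlam0 : 0 < lam)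
    (hδ : 8 * β + lam ≤ 1 / 4)
    (CC : Finset V)
    (hdeg : ∀ v ∈ CC, ((closedNbhd G v ∩ CC).card : ℝ)
      ≥ (1 - (8 * β + lam)) * CC.card)
    {κ : Type*} (c : V → κ)
    (hsplit : ∃ u ∈ CC, ∃ v ∈ CC, c u ≠ c v) :
    costOn G CC (fun _ => (0 : ℕ)) ≤ costOn G CC c := by
  classical
  have hδ0 : (0:ℝ) ≤ 8 * β + lam := by linarith
  -- minus-degree bound
  have hmd : ∀ v ∈ CC, ((CC.filter (fun u => u ≠ v ∧ ¬ G.Adj v u)).card : ℝ)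
      ≤ (8 * β + lam) * CC.card := by
    intro v hv
    have h1 := hdeg v hv
    have hset : CC.filter (fun u => u ≠ v ∧ ¬ G.Adj v u) = CC \ (closedNbhd G v ∩ CC) := by
      ext u
      simp only [Finset.mem_filter, Finset.mem_sdiff, Finset.mem_inter, closedNbhd,
        Finset.mem_insert, SimpleGraph.mem_neighborFinset]
      tauto
    have hsub : closedNbhd G v ∩ CC ⊆ CC := Finset.inter_subset_right
    have hcard : (CC.filter (fun u => u ≠ v ∧ ¬ G.Adj v u)).card
        = CC.card - (closedNbhd G v ∩ CC).card := by
      rw [hset, Finset.card_sdiff_of_subset hsub]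
    rw [hcard, Nat.cast_sub (Finset.card_le_card hsub)]
    linarith
  have hcore := core_ineq G (8 * β + lam) hδ0 hδ CC hmd c
  set Mc := (CC ×ˢ CC).filter (fun p : V × V => p.1 ≠ p.2 ∧ ¬ G.Adj p.1 p.2 ∧ c p.1 ≠ c p.2)
    with hMcdef
  set Pc := (CC ×ˢ CC).filter (fun p : V × V => G.Adj p.1 p.2 ∧ c p.1 ≠ c p.2) with hPcdef
  set Mnc := (CC ×ˢ CC).filter (fun p : V × V => p.1 ≠ p.2 ∧ ¬ G.Adj p.1 p.2 ∧ c p.1 = c p.2)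
    with hMncdef
  simp only [costOn]
  apply Nat.div_le_div_right
  calc ((CC ×ˢ CC).filter (fun p : V × V => p.1 ≠ p.2 ∧
        ((G.Adj p.1 p.2 ∧ (0:ℕ) ≠ 0) ∨ (¬ G.Adj p.1 p.2 ∧ True)))).card
      = Mc.card + Mnc.card := by
        have hunion : (CC ×ˢ CC).filter (fun p : V × V => p.1 ≠ p.2 ∧
            ((G.Adj p.1 p.2 ∧ (0:ℕ) ≠ 0) ∨ (¬ G.Adj p.1 p.2 ∧ True)))
            = Mc ∪ Mnc := by
          rw [hMcdef, hMncdef, ← Finset.filter_or]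
          refine Finset.filter_congr fun p hp => ?_
          constructor
          · rintro ⟨hne, (⟨_, h0⟩ | ⟨hna, _⟩)⟩
            · exact absurd rfl h0
            · by_cases hc : c p.1 = c p.2
              · exact Or.inr ⟨hne, hna, hc⟩
              · exact Or.inl ⟨hne, hna, hc⟩
          · rintro (⟨hne, hna, _⟩ | ⟨hne, hna, _⟩) <;> exact ⟨hne, Or.inr ⟨hna, trivial⟩⟩
        have hdisj : Disjoint Mc Mnc := by
          rw [Finset.disjoint_left]
          intro p hp hq
          exact (Finset.mem_filter.1 hp).2.2.2 (Finset.mem_filter.1 hq).2.2.2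
        rw [hunion, Finset.card_union_of_disjoint hdisj]
    _ ≤ Pc.card + Mnc.card := by
        have : Mc.card ≤ Pc.card := hcore
        omega
    _ = ((CC ×ˢ CC).filter (fun p : V × V => p.1 ≠ p.2 ∧
        ((G.Adj p.1 p.2 ∧ c p.1 ≠ c p.2) ∨ (¬ G.Adj p.1 p.2 ∧ c p.1 = c p.2)))).card := by
        have hunion : (CC ×ˢ CC).filter (fun p : V × V => p.1 ≠ p.2 ∧
            ((G.Adj p.1 p.2 ∧ c p.1 ≠ c p.2) ∨ (¬ G.Adj p.1 p.2 ∧ c p.1 = c p.2)))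
            = Pc ∪ Mnc := by
          rw [hPcdef, hMncdef, ← Finset.filter_or]
          refine Finset.filter_congr fun p hp => ?_
          constructor
          · rintro ⟨hne, (⟨ha, hc⟩ | ⟨hna, hs⟩)⟩
            · exact Or.inl ⟨ha, hc⟩
            · exact Or.inr ⟨hne, hna, hs⟩
          · rintro (⟨ha, hc⟩ | ⟨hne, hna, hs⟩)
            · exact ⟨G.ne_of_adj ha, Or.inl ⟨ha, hc⟩⟩
            · exact ⟨hne, Or.inr ⟨hna, hs⟩⟩
        have hdisj : Disjoint Pc Mnc := by
          rw [Finset.disjoint_left]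
          intro p hp hq
          exact (Finset.mem_filter.1 hq).2.2.1 (Finset.mem_filter.1 hp).2.1
        rw [hunion, Finset.card_union_of_disjoint hdisj]

end
end

section
/- Case A of the splitting lemma: Let CC be a vertex set where each vertex has at least (1-δ)|CC| positive neighbors in CC, δ ≤ 1/4. If CC is partitioned into clusters C₁, …, C_k each of size at most (1-2δ)|CC|, then the number of + edges cut by the partition is at least δ|CC|²/2, which is at least the number of − edges inside CC. -/
open Finset Classical

noncomputable section

variable {V : Type*} [Fintype V] [DecidableEq V]

lemma card_filter_prod_s10 (s : Finset V) (P : V → V → Prop)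
    [DecidablePred fun p : V × V => P p.1 p.2] [∀ a, DecidablePred (P a)] :
    ((s ×ˢ s).filter (fun p : V × V => P p.1 p.2)).card
      = ∑ a ∈ s, (s.filter (P a)).card := by
  rw [Finset.card_filter, Finset.sum_product]
  exact Finset.sum_congr rfl fun a _ => (Finset.card_filter _ _).symm

lemma two_mul_half_card {s : Finset (V × V)}
    (hsymm : ∀ p ∈ s, Prod.swap p ∈ s) (hdiag : ∀ p ∈ s, p.1 ≠ p.2) :
    ((s.card / 2 : ℕ) : ℝ) = (s.card : ℝ) / 2 := by
  classical
  let e := Fintype.equivFin V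
  have key : s.card = 2 * (s.filter (fun p => e p.1 < e p.2)).card := by
    have hneg : s.filter (fun p => ¬ e p.1 < e p.2)
        = (s.filter (fun p => e p.1 < e p.2)).image Prod.swap := by
      ext p
      simp only [mem_filter, mem_image]
      constructor
      · rintro ⟨hp, hlt⟩
        refine ⟨Prod.swap p, ⟨hsymm p hp, ?_⟩, Prod.swap_swap p⟩
        have hne : e p.1 ≠ e p.2 := fun h => hdiag p hp (e.injective h)
        simpa using lt_of_le_of_ne (not_lt.1 hlt) hne.symm
      · rintro ⟨q, ⟨hq, hlt⟩, rfl⟩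
        exact ⟨hsymm q hq, by simpa using le_of_lt hlt⟩
    have := Finset.card_filter_add_card_filter_not
      (s := s) (p := fun p => e p.1 < e p.2)
    rw [hneg, Finset.card_image_of_injective _ Prod.swap_injective] at this
    omega
  rw [key]
  push_cast [Nat.mul_div_cancel_left _ (by norm_num : 0 < 2)]
  ring

/-- Case A of the splitting lemma: if every vertex of `CC` has at
least `(1-δ)|CC|` positive neighbors in `CC` (`0 ≤ δ ≤ 1/4`), and `CC` is
partitioned into clusters each of size at most `(1-2δ)|CC|`, then the number of
`+` edges cut is at least `δ|CC|²/2`, which is at least the number of `−` edges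
inside `CC`. -/
theorem stmt10 (G : SimpleGraph V) (δ : ℝ) (hδ0 : 0 ≤ δ) (hδ : δ ≤ 1 / 4)
    (CC : Finset V)
    (hdeg : ∀ v ∈ CC, ((closedNbhd G v ∩ CC).card : ℝ) ≥ (1 - δ) * CC.card)
    {κ : Type*} (c : V → κ)
    (hsize : ∀ i : κ, (((CC.filter (fun v => c v = i)).card : ℝ))
      ≤ (1 - 2 * δ) * CC.card) :
    δ * (CC.card : ℝ) ^ 2 / 2 ≤ (cutCount G CC c : ℝ)
      ∧ (minusCount G CC : ℝ) ≤ δ * (CC.card : ℝ) ^ 2 / 2 := by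
  set n : ℝ := (CC.card : ℝ) with hn
  have hn0 : 0 ≤ n := Nat.cast_nonneg _
  constructor
  · -- cut count lower bound
    have hper : ∀ v ∈ CC, δ * n ≤ ((CC.filter (fun u => G.Adj v u ∧ c v ≠ c u)).card : ℝ) := by
      intro v hv
      have hsub : (closedNbhd G v ∩ CC) \ (CC.filter (fun u => c u = c v))
          ⊆ CC.filter (fun u => G.Adj v u ∧ c v ≠ c u) := by
        intro u hu
        simp only [closedNbhd, mem_sdiff, mem_inter, mem_insert,
          SimpleGraph.mem_neighborFinset, mem_filter, not_and] at hu ⊢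
        obtain ⟨⟨h1, h2⟩, h3⟩ := hu
        have hcu : c u ≠ c v := h3 h2
        rcases h1 with rfl | hadj
        · exact absurd rfl hcu
        · exact ⟨h2, hadj, fun h => hcu h.symm⟩
      have h1 := Finset.card_le_card hsub
      have h2 := Finset.card_le_card_sdiff_add_card (s := closedNbhd G v ∩ CC)
        (t := CC.filter (fun u => c u = c v))
      have h3 := hsize (c v)
      have h4 := hdeg v hv
      have hc1 : ((closedNbhd G v ∩ CC).card : ℝ)
          ≤ (((closedNbhd G v ∩ CC) \ (CC.filter (fun u => c u = c v))).card : ℝ)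
            + ((CC.filter (fun u => c u = c v)).card : ℝ) := by exact_mod_cast h2
      have hc2 : ((((closedNbhd G v ∩ CC) \ (CC.filter (fun u => c u = c v))).card : ℝ))
          ≤ ((CC.filter (fun u => G.Adj v u ∧ c v ≠ c u)).card : ℝ) := by exact_mod_cast h1
      nlinarith [h3, h4, hc1, hc2]
    have hsum : δ * n ^ 2
        ≤ (((CC ×ˢ CC).filter (fun p : V × V => G.Adj p.1 p.2 ∧ c p.1 ≠ c p.2)).card : ℝ) := by
      have hkey : ((CC ×ˢ CC).filter (fun p : V × V => G.Adj p.1 p.2 ∧ c p.1 ≠ c p.2)).card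
          = ∑ v ∈ CC, (CC.filter (fun u => G.Adj v u ∧ c v ≠ c u)).card :=
        card_filter_prod_s10 CC (fun a b => G.Adj a b ∧ c a ≠ c b)
      rw [hkey]
      push_cast
      calc δ * n ^ 2 = ∑ _v ∈ CC, δ * n := by
            rw [Finset.sum_const, nsmul_eq_mul]; ring
        _ ≤ ∑ v ∈ CC, ((CC.filter (fun u => G.Adj v u ∧ c v ≠ c u)).card : ℝ) :=
            Finset.sum_le_sum hper
    have heven : ((cutCount G CC c : ℕ) : ℝ)
        = (((CC ×ˢ CC).filter (fun p : V × V => G.Adj p.1 p.2 ∧ c p.1 ≠ c p.2)).card : ℝ) / 2 := by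
      apply two_mul_half_card
      · intro p hp
        simp only [mem_filter, mem_product] at hp ⊢
        exact ⟨⟨hp.1.2, hp.1.1⟩, hp.2.1.symm, hp.2.2.symm⟩
      · intro p hp
        simp only [mem_filter] at hp
        exact hp.2.1.ne
    rw [heven]
    linarith
  · -- minus count upper bound
    have hper : ∀ v ∈ CC, ((CC.filter (fun u => v ≠ u ∧ ¬ G.Adj v u)).card : ℝ) ≤ δ * n := by
      intro v hv
      have hset : CC.filter (fun u => v ≠ u ∧ ¬ G.Adj v u) = CC \ (closedNbhd G v ∩ CC) := by
        ext u
        simp only [closedNbhd, mem_filter, mem_sdiff, mem_inter, mem_insert,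
          SimpleGraph.mem_neighborFinset]
        constructor
        · rintro ⟨hu, hne, hna⟩
          exact ⟨hu, fun h => h.1.elim (fun h' => hne h'.symm) hna⟩
        · rintro ⟨hu, h⟩
          refine ⟨hu, fun h' => h ⟨Or.inl h'.symm, hu⟩, fun h' => h ⟨Or.inr h', hu⟩⟩
      rw [hset, Finset.card_sdiff_of_subset Finset.inter_subset_right]
      have hle := Finset.card_le_card (Finset.inter_subset_right
        (s₁ := closedNbhd G v) (s₂ := CC))
      have h4 := hdeg v hv
      rw [Nat.cast_sub hle]
      linarith
    have hsum : (((CC ×ˢ CC).filter (fun p : V × V => p.1 ≠ p.2 ∧ ¬ G.Adj p.1 p.2)).card : ℝ)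
        ≤ δ * n ^ 2 := by
      have hkey : ((CC ×ˢ CC).filter (fun p : V × V => p.1 ≠ p.2 ∧ ¬ G.Adj p.1 p.2)).card
          = ∑ v ∈ CC, (CC.filter (fun u => v ≠ u ∧ ¬ G.Adj v u)).card :=
        card_filter_prod_s10 CC (fun a b => a ≠ b ∧ ¬ G.Adj a b)
      rw [hkey]
      push_cast
      calc ∑ v ∈ CC, ((CC.filter (fun u => v ≠ u ∧ ¬ G.Adj v u)).card : ℝ)
          ≤ ∑ _v ∈ CC, δ * n := Finset.sum_le_sum hper
        _ = δ * n ^ 2 := by rw [Finset.sum_const, nsmul_eq_mul]; ring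
    have hdiv : ((minusCount G CC : ℕ) : ℝ)
        ≤ (((CC ×ˢ CC).filter (fun p : V × V => p.1 ≠ p.2 ∧ ¬ G.Adj p.1 p.2)).card : ℝ) / 2 :=
      Nat.cast_div_le
    linarith


end
end

section
/- Case B of the splitting lemma: Let CC be a vertex set where each vertex has at least (1-δ)|CC| positive neighbors inside CC, with δ ≤ 1/4 (so 1 - 3δ ≥ δ). Suppose CC is partitioned into clusters including one cluster C* with |C*| > (1-2δ)|CC| and another nonempty cluster C_i ≠ C*. Then merging C_i into C* does not increase the correlation clustering cost; in particular each v ∈ C_i has more than (1-3δ)|CC| + edges to C* and at most δ|CC| − edges to C*. -/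
open Finset Classical

noncomputable section

variable {V : Type*} [Fintype V] [DecidableEq V]

private lemma card_filter_product' {α β : Type*} (s : Finset α) (t : Finset β)
    (r : α → β → Prop) :
    ((s ×ˢ t).filter (fun p => r p.1 p.2)).card
      = ∑ u ∈ s, (t.filter (fun w => r u w)).card := by
  classical
  rw [Finset.card_filter, Finset.sum_product]
  exact Finset.sum_congr rfl fun u _ => (Finset.card_filter _ _).symm

private lemma card_swap_filter_product {α : Type*} [DecidableEq α] (s t : Finset α)
    (r : α → α → Prop) (hr : ∀ x y, r x y ↔ r y x) :
    ((t ×ˢ s).filter (fun p => r p.1 p.2)).card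
      = ((s ×ˢ t).filter (fun p => r p.1 p.2)).card := by
  classical
  apply Finset.card_bij' (fun p _ => Prod.swap p) (fun p _ => Prod.swap p)
  · intro p hp
    rw [Finset.mem_filter, Finset.mem_product] at hp ⊢
    exact ⟨⟨hp.1.2, hp.1.1⟩, (hr _ _).mpr hp.2⟩
  · intro p hp
    rw [Finset.mem_filter, Finset.mem_product] at hp ⊢
    exact ⟨⟨hp.1.2, hp.1.1⟩, (hr _ _).mpr hp.2⟩
  · intro p _; exact Prod.swap_swap p
  · intro p _; exact Prod.swap_swap p


private lemma merge_le {κ : Type*} (G : SimpleGraph V) (CC : Finset V) (c : V → κ)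
    (a b : κ) (hab : a ≠ b)
    (h : ∀ v ∈ CC.filter (fun v => c v = b),
      ((CC.filter (fun v => c v = a)).filter (fun w => w ≠ v ∧ ¬ G.Adj v w)).card
        ≤ ((CC.filter (fun v => c v = a)).filter (fun w => G.Adj v w)).card) :
    costOn G CC (fun v => if c v = b then a else c v) ≤ costOn G CC c := by
  classical
  unfold costOn
  apply Nat.div_le_div_right
  set Ci := CC.filter (fun v => c v = b) with hCi
  set Cs := CC.filter (fun v => c v = a) with hCs
  set c' : V → κ := fun v => if c v = b then a else c v with hc'
  set D1 := (CC ×ˢ CC).filter (fun p : V × V => p.1 ≠ p.2 ∧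
    ((G.Adj p.1 p.2 ∧ c' p.1 ≠ c' p.2) ∨ (¬ G.Adj p.1 p.2 ∧ c' p.1 = c' p.2))) with hD1
  set D0 := (CC ×ˢ CC).filter (fun p : V × V => p.1 ≠ p.2 ∧
    ((G.Adj p.1 p.2 ∧ c p.1 ≠ c p.2) ∨ (¬ G.Adj p.1 p.2 ∧ c p.1 = c p.2))) with hD0
  set Mset := (CC ×ˢ CC).filter (fun p : V × V => p.1 ≠ p.2 ∧ ¬ G.Adj p.1 p.2 ∧
    ((c p.1 = b ∧ c p.2 = a) ∨ (c p.1 = a ∧ c p.2 = b))) with hMset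
  set Pset := (CC ×ˢ CC).filter (fun p : V × V => G.Adj p.1 p.2 ∧
    ((c p.1 = b ∧ c p.2 = a) ∨ (c p.1 = a ∧ c p.2 = b))) with hPset
  have hc'same : ∀ u w, c u = c w → c' u = c' w := by
    intro u w huw
    simp only [hc', huw]
  have key1 : D1 \ D0 ⊆ Mset := by
    intro p hp
    rw [mem_sdiff] at hp
    obtain ⟨hp1, hp0⟩ := hp
    rw [hD1, mem_filter] at hp1
    obtain ⟨hprod, hne, hcond⟩ := hp1
    rw [hMset, mem_filter]
    by_cases hadj : G.Adj p.1 p.2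
    · exfalso
      have hcut : c' p.1 ≠ c' p.2 := by
        rcases hcond with ⟨_, h2⟩ | ⟨h1, _⟩
        · exact h2
        · exact absurd hadj h1
      have : c p.1 ≠ c p.2 := fun heq => hcut (hc'same _ _ heq)
      exact hp0 (by rw [hD0, mem_filter]; exact ⟨hprod, hne, Or.inl ⟨hadj, this⟩⟩)
    · have hsame : c' p.1 = c' p.2 := by
        rcases hcond with ⟨h1, _⟩ | ⟨_, h2⟩
        · exact absurd h1 hadj
        · exact h2
      have hdiff : c p.1 ≠ c p.2 := by
        intro heq
        exact hp0 (by rw [hD0, mem_filter]; exact ⟨hprod, hne, Or.inr ⟨hadj, heq⟩⟩)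
      refine ⟨hprod, hne, hadj, ?_⟩
      by_cases h1 : c p.1 = b <;> by_cases h2 : c p.2 = b
      · exact absurd (h1.trans h2.symm) hdiff
      · left
        refine ⟨h1, ?_⟩
        have e1 : c' p.1 = a := by simp only [hc']; rw [if_pos h1]
        have e2 : c' p.2 = c p.2 := by simp only [hc']; rw [if_neg h2]
        rw [← e2, ← hsame, e1]
      · right
        refine ⟨?_, h2⟩
        have e1 : c' p.1 = c p.1 := by simp only [hc']; rw [if_neg h1]
        have e2 : c' p.2 = a := by simp only [hc']; rw [if_pos h2]
        rw [← e1, hsame, e2]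
      · exfalso
        apply hdiff
        have e1 : c' p.1 = c p.1 := by simp only [hc']; rw [if_neg h1]
        have e2 : c' p.2 = c p.2 := by simp only [hc']; rw [if_neg h2]
        rw [← e1, ← e2, hsame]
  have key2 : Pset ⊆ D0 \ D1 := by
    intro p hp
    rw [hPset, mem_filter] at hp
    obtain ⟨hprod, hadj, hdisj⟩ := hp
    have hne : p.1 ≠ p.2 := G.ne_of_adj hadj
    have hdiff : c p.1 ≠ c p.2 := by
      rcases hdisj with ⟨h1, h2⟩ | ⟨h1, h2⟩
      · rw [h1, h2]; exact fun e => hab e.symm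
      · rw [h1, h2]; exact hab
    have hsame : c' p.1 = c' p.2 := by
      rcases hdisj with ⟨h1, h2⟩ | ⟨h1, h2⟩
      · simp only [hc']
        rw [if_pos h1, if_neg (show c p.2 ≠ b by rw [h2]; exact hab), h2]
      · simp only [hc']
        rw [if_neg (show c p.1 ≠ b by rw [h1]; exact hab), if_pos h2, h1]
    rw [mem_sdiff]
    constructor
    · rw [hD0, mem_filter]; exact ⟨hprod, hne, Or.inl ⟨hadj, hdiff⟩⟩
    · intro hmem
      rw [hD1, mem_filter] at hmem
      rcases hmem.2.2 with ⟨_, hcut⟩ | ⟨hnadj, _⟩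
      · exact hcut hsame
      · exact hnadj hadj
  have key3 : Mset.card ≤ Pset.card := by
    set Mba := (Ci ×ˢ Cs).filter (fun p : V × V => p.2 ≠ p.1 ∧ ¬ G.Adj p.1 p.2) with hMba
    set Mab := (Cs ×ˢ Ci).filter (fun p : V × V => p.2 ≠ p.1 ∧ ¬ G.Adj p.1 p.2) with hMab
    set Pba := (Ci ×ˢ Cs).filter (fun p : V × V => G.Adj p.1 p.2) with hPba
    set Pab := (Cs ×ˢ Ci).filter (fun p : V × V => G.Adj p.1 p.2) with hPab
    have hMeq : Mset = Mba ∪ Mab := by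
      ext p
      rw [hMset, hMba, hMab, mem_union, mem_filter, mem_filter, mem_filter,
        mem_product, mem_product, mem_product]
      simp only [hCi, hCs, mem_filter]
      constructor
      · rintro ⟨⟨hp1, hp2⟩, hne, hnadj, ⟨h1, h2⟩ | ⟨h1, h2⟩⟩
        · exact Or.inl ⟨⟨⟨hp1, h1⟩, hp2, h2⟩, fun e => hne e.symm, hnadj⟩
        · exact Or.inr ⟨⟨⟨hp1, h1⟩, hp2, h2⟩, fun e => hne e.symm, hnadj⟩
      · rintro (⟨⟨⟨hp1, h1⟩, hp2, h2⟩, hne, hnadj⟩ | ⟨⟨⟨hp1, h1⟩, hp2, h2⟩, hne, hnadj⟩)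
        · exact ⟨⟨hp1, hp2⟩, fun e => hne e.symm, hnadj, Or.inl ⟨h1, h2⟩⟩
        · exact ⟨⟨hp1, hp2⟩, fun e => hne e.symm, hnadj, Or.inr ⟨h1, h2⟩⟩
    have hPeq : Pset = Pba ∪ Pab := by
      ext p
      rw [hPset, hPba, hPab, mem_union, mem_filter, mem_filter, mem_filter,
        mem_product, mem_product, mem_product]
      simp only [hCi, hCs, mem_filter]
      constructor
      · rintro ⟨⟨hp1, hp2⟩, hadj, ⟨h1, h2⟩ | ⟨h1, h2⟩⟩
        · exact Or.inl ⟨⟨⟨hp1, h1⟩, hp2, h2⟩, hadj⟩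
        · exact Or.inr ⟨⟨⟨hp1, h1⟩, hp2, h2⟩, hadj⟩
      · rintro (⟨⟨⟨hp1, h1⟩, hp2, h2⟩, hadj⟩ | ⟨⟨⟨hp1, h1⟩, hp2, h2⟩, hadj⟩)
        · exact ⟨⟨hp1, hp2⟩, hadj, Or.inl ⟨h1, h2⟩⟩
        · exact ⟨⟨hp1, hp2⟩, hadj, Or.inr ⟨h1, h2⟩⟩
    have hdisjCiCs : ∀ v, v ∈ Ci → v ∈ Cs → False := by
      intro v h1 h2
      rw [hCi, mem_filter] at h1
      rw [hCs, mem_filter] at h2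
      exact hab (h2.2.symm.trans h1.2)
    have hMdisj : Disjoint Mba Mab := by
      rw [Finset.disjoint_left]
      intro p h1 h2
      rw [hMba, mem_filter, mem_product] at h1
      rw [hMab, mem_filter, mem_product] at h2
      exact hdisjCiCs p.1 h1.1.1 h2.1.1
    have hPdisj : Disjoint Pba Pab := by
      rw [Finset.disjoint_left]
      intro p h1 h2
      rw [hPba, mem_filter, mem_product] at h1
      rw [hPab, mem_filter, mem_product] at h2
      exact hdisjCiCs p.1 h1.1.1 h2.1.1
    have hMabba : Mab.card = Mba.card := by
      rw [hMab, hMba]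
      apply Finset.card_bij' (fun p _ => Prod.swap p) (fun p _ => Prod.swap p)
      · intro p hp
        rw [mem_filter, mem_product] at hp ⊢
        exact ⟨⟨hp.1.2, hp.1.1⟩, fun e => hp.2.1 e.symm, fun ha => hp.2.2 ha.symm⟩
      · intro p hp
        rw [mem_filter, mem_product] at hp ⊢
        exact ⟨⟨hp.1.2, hp.1.1⟩, fun e => hp.2.1 e.symm, fun ha => hp.2.2 ha.symm⟩
      · intro p _; exact Prod.swap_swap p
      · intro p _; exact Prod.swap_swap p
    have hPabba : Pab.card = Pba.card := by
      rw [hPab, hPba]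
      apply Finset.card_bij' (fun p _ => Prod.swap p) (fun p _ => Prod.swap p)
      · intro p hp
        rw [mem_filter, mem_product] at hp ⊢
        exact ⟨⟨hp.1.2, hp.1.1⟩, hp.2.symm⟩
      · intro p hp
        rw [mem_filter, mem_product] at hp ⊢
        exact ⟨⟨hp.1.2, hp.1.1⟩, hp.2.symm⟩
      · intro p _; exact Prod.swap_swap p
      · intro p _; exact Prod.swap_swap p
    have hMbacard : Mba.card = ∑ v ∈ Ci, (Cs.filter (fun w => w ≠ v ∧ ¬ G.Adj v w)).card := by
      have h2 := card_filter_product' Ci Cs (fun u w => w ≠ u ∧ ¬ G.Adj u w)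
      rw [hMba]
      convert h2 using 2
      · ext p; simp only [Finset.mem_filter]
      · congr 1; ext w; simp only [Finset.mem_filter]
    have hPbacard : Pba.card = ∑ v ∈ Ci, (Cs.filter (fun w => G.Adj v w)).card := by
      have h2 := card_filter_product' Ci Cs (fun u w => G.Adj u w)
      rw [hPba]
      convert h2 using 2 <;>
        first
          | (ext p; simp only [Finset.mem_filter])
          | (congr 1; ext w; simp only [Finset.mem_filter])
    have hsum : Mba.card ≤ Pba.card := by
      rw [hMbacard, hPbacard]
      exact Finset.sum_le_sum h
    calc Mset.card = Mba.card + Mab.card := by rw [hMeq, card_union_of_disjoint hMdisj]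
      _ ≤ Pba.card + Pab.card := by omega
      _ = Pset.card := by rw [hPeq, card_union_of_disjoint hPdisj]
  calc D1.card = (D1 \ D0).card + (D1 ∩ D0).card := (card_sdiff_add_card_inter D1 D0).symm
    _ ≤ Pset.card + (D0 ∩ D1).card := by
        rw [inter_comm]
        exact Nat.add_le_add_right (le_trans (card_le_card key1) key3) _
    _ ≤ (D0 \ D1).card + (D0 ∩ D1).card := Nat.add_le_add_right (card_le_card key2) _
    _ = D0.card := card_sdiff_add_card_inter D0 D1

/-- Case B of the splitting lemma: if every vertex of `CC` has at
least `(1-δ)|CC|` positive neighbors inside `CC`, `δ ≤ 1/4`, and the partition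
`c` of `CC` has a cluster `C* = c⁻¹(a) ∩ CC` with `|C*| > (1-2δ)|CC|` and another
nonempty cluster `Cᵢ = c⁻¹(b) ∩ CC`, then merging `Cᵢ` into `C*` does not
increase the cost; moreover each `v ∈ Cᵢ` has more than `(1-3δ)|CC|` `+` edges
to `C*` and at most `δ|CC|` `−` edges to `C*`. -/
theorem stmt11 (G : SimpleGraph V) (δ : ℝ) (hδ0 : 0 ≤ δ) (hδ : δ ≤ 1 / 4)
    (CC : Finset V)
    (hdeg : ∀ v ∈ CC, ((closedNbhd G v ∩ CC).card : ℝ) ≥ (1 - δ) * CC.card)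
    {κ : Type*} (c : V → κ) (a b : κ) (hab : a ≠ b)
    (Cstar Ci : Finset V)
    (hCstar : Cstar = CC.filter (fun v => c v = a))
    (hCi : Ci = CC.filter (fun v => c v = b))
    (hbig : ((Cstar.card : ℝ)) > (1 - 2 * δ) * CC.card)
    (hne : Ci.Nonempty) :
    costOn G CC (fun v => if c v = b then a else c v) ≤ costOn G CC c
    ∧ ∀ v ∈ Ci,
        ((closedNbhd G v ∩ Cstar).card : ℝ) > (1 - 3 * δ) * CC.card
        ∧ (((Cstar.filter (fun w => w ≠ v ∧ ¬ G.Adj v w)).card : ℝ)) ≤ δ * CC.card := by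
  classical
  have hCstarSub : Cstar ⊆ CC := by rw [hCstar]; exact filter_subset _ _
  have hmemStar : ∀ v, v ∈ Cstar ↔ v ∈ CC ∧ c v = a := by
    intro v; rw [hCstar]; exact mem_filter
  have hmemI : ∀ v, v ∈ Ci ↔ v ∈ CC ∧ c v = b := by
    intro v; rw [hCi]; exact mem_filter
  have hpart2 : ∀ v ∈ Ci,
      ((closedNbhd G v ∩ Cstar).card : ℝ) > (1 - 3 * δ) * CC.card
      ∧ (((Cstar.filter (fun w => w ≠ v ∧ ¬ G.Adj v w)).card : ℝ)) ≤ δ * CC.card := by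
    intro v hv
    obtain ⟨hvCC, hvb⟩ := (hmemI v).mp hv
    have hdegv := hdeg v hvCC
    constructor
    · -- plus edges
      have hsub : closedNbhd G v ∩ CC ⊆ (closedNbhd G v ∩ Cstar) ∪ (CC \ Cstar) := by
        intro w hw
        rw [mem_inter] at hw
        rw [mem_union, mem_inter, mem_sdiff]
        by_cases hws : w ∈ Cstar
        · exact Or.inl ⟨hw.1, hws⟩
        · exact Or.inr ⟨hw.2, hws⟩
      have h1 : (closedNbhd G v ∩ CC).card ≤ (closedNbhd G v ∩ Cstar).card + (CC \ Cstar).card :=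
        le_trans (card_le_card hsub) (card_union_le _ _)
      have h2 : (CC \ Cstar).card = CC.card - Cstar.card := card_sdiff_of_subset hCstarSub
      have h3 : Cstar.card ≤ CC.card := card_le_card hCstarSub
      have h1R : ((closedNbhd G v ∩ CC).card : ℝ)
          ≤ ((closedNbhd G v ∩ Cstar).card : ℝ) + ((CC.card : ℝ) - (Cstar.card : ℝ)) := by
        rw [← Nat.cast_sub h3]
        exact_mod_cast h2 ▸ h1
      linarith
    · -- minus edges
      have hdisj : Disjoint (Cstar.filter (fun w => w ≠ v ∧ ¬ G.Adj v w)) (closedNbhd G v ∩ CC) := by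
        rw [Finset.disjoint_left]
        intro w hw hw2
        obtain ⟨hws, hwv, hwadj⟩ :
            w ∈ Cstar ∧ w ≠ v ∧ ¬ G.Adj v w := by
          have := mem_filter.mp hw; exact ⟨this.1, this.2.1, this.2.2⟩
        have hmem : w ∈ closedNbhd G v := (mem_inter.mp hw2).1
        rw [closedNbhd, mem_insert, SimpleGraph.mem_neighborFinset] at hmem
        rcases hmem with h | h
        · exact hwv h
        · exact hwadj h
      have hsub2 : (Cstar.filter (fun w => w ≠ v ∧ ¬ G.Adj v w)) ∪ (closedNbhd G v ∩ CC) ⊆ CC := by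
        apply union_subset
        · exact (filter_subset _ _).trans hCstarSub
        · exact inter_subset_right
      have hcards : (Cstar.filter (fun w => w ≠ v ∧ ¬ G.Adj v w)).card
          + (closedNbhd G v ∩ CC).card ≤ CC.card := by
        rw [← card_union_of_disjoint hdisj]
        exact card_le_card hsub2
      have hle : ((Cstar.filter (fun w => w ≠ v ∧ ¬ G.Adj v w)).card : ℝ)
          + ((closedNbhd G v ∩ CC).card : ℝ) ≤ (CC.card : ℝ) := by exact_mod_cast hcards
      linarith
  refine ⟨?_, hpart2⟩
  apply merge_le G CC c a b hab
  intro v hv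
  rw [← hCi] at hv
  rw [← hCstar]
  obtain ⟨hplus, hminus⟩ := hpart2 v hv
  have hvnot : v ∉ Cstar := by
    intro hmem
    exact hab (((hmemStar v).mp hmem).2.symm.trans ((hmemI v).mp hv).2)
  have hEq : closedNbhd G v ∩ Cstar = Cstar.filter (fun w => G.Adj v w) := by
    ext w
    rw [mem_inter, mem_filter, closedNbhd, mem_insert, SimpleGraph.mem_neighborFinset]
    constructor
    · rintro ⟨h1 | h1, h2⟩
      · exact absurd (h1 ▸ h2) hvnot
      · exact ⟨h2, h1⟩
    · rintro ⟨h1, h2⟩; exact ⟨Or.inr h2, h1⟩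
  rw [hEq] at hplus
  have h14 : δ * (CC.card : ℝ) ≤ (1 - 3 * δ) * (CC.card : ℝ) := by
    have : (0:ℝ) ≤ (CC.card : ℝ) := Nat.cast_nonneg _
    nlinarith
  have hfin : ((Cstar.filter (fun w => w ≠ v ∧ ¬ G.Adj v w)).card : ℝ)
      < ((Cstar.filter (fun w => G.Adj v w)).card : ℝ) := by linarith
  exact_mod_cast hfin.le

end
end

section
/- Optimality on the trimmed instance: Let G' be a (possibly non-complete) correlation clustering instance obtained from the complete signed instance G by deleting (making neutral) every + edge whose endpoints lie in different connected components of G̃. Assuming that for every connected component CC of G̃ no partition of CC into two or more clusters has smaller cost than keeping CC whole, the clustering whose clusters are exactly the connected components of G̃ is an optimal solution for the instance G'. -/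
/-!
Every pair of vertices inside a component `K` of `G̃` is a `+` or `−` pair of `G'` exactly as in
`G`, so the cost of any clustering `c` on `G'` is at least the sum over the components `K` of the
cost of `c` restricted to `K`. The clustering by components cuts no `+` edge of `G'` and joins only
pairs inside a component, so for it this is an equality, and each of its summands is the cost of
keeping `K` whole, which by assumption is at most the cost of `c` on `K`.
-/

open Finset Classical

noncomputable section

variable {V : Type*} [Fintype V] [DecidableEq V]

/-- Min-disagree cost for a (possibly non-complete) signed instance with `+`
graph `P` and `−` graph `M` (pairs adjacent in neither are neutral): the number
of `+` edges cut by `c` plus the number of `−` edges inside clusters of `c`. -/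
def costI (P M : SimpleGraph V) {κ : Type*} (c : V → κ) : ℕ :=
  ((Finset.univ ×ˢ Finset.univ).filter (fun p : V × V => p.1 ≠ p.2 ∧
    ((P.Adj p.1 p.2 ∧ c p.1 ≠ c p.2) ∨ (M.Adj p.1 p.2 ∧ c p.1 = c p.2)))).card / 2

/-- The `+` edge graph of the trimmed instance `G'`: keep only the `+` edges of
`G` whose endpoints lie in the same connected component of `G̃`. -/
def trimmedPlus (G Gt : SimpleGraph V) : SimpleGraph V where
  Adj u v := G.Adj u v ∧ Gt.connectedComponentMk u = Gt.connectedComponentMk v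
  symm := ⟨fun _ _ h => ⟨h.1.symm, h.2.symm⟩⟩
  loopless := ⟨fun a h => G.loopless.irrefl a h.1⟩

lemma even_card_of_swap_mem {s : Finset (V × V)} (hswap : ∀ p ∈ s, p.swap ∈ s)
    (hdiag : ∀ p ∈ s, p.1 ≠ p.2) : Even #s := by
  -- `s` is the set of darts of the graph whose adjacency it defines.
  let H : SimpleGraph V :=
    { Adj u v := (u, v) ∈ s
      symm := ⟨fun _ _ h => hswap _ h⟩
      loopless := ⟨fun _ h => hdiag _ h rfl⟩ }
  have hdarts : Fintype.card H.Dart = #s := by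
    rw [← Fintype.card_coe s]
    exact Fintype.card_congr
      { toFun d := ⟨d.toProd, d.adj⟩, invFun p := ⟨p.1, p.2⟩,
        left_inv _ := rfl, right_inv _ := rfl }
  exact ⟨_, hdarts ▸ H.dart_card_eq_twice_card_edges.trans (two_mul _)⟩

def disagreementPairs (P M : SimpleGraph V) (S : Finset V) {κ : Type*} (c : V → κ) :
    Finset (V × V) :=
  (S ×ˢ S).filter fun p => p.1 ≠ p.2 ∧
    ((P.Adj p.1 p.2 ∧ c p.1 ≠ c p.2) ∨ (M.Adj p.1 p.2 ∧ c p.1 = c p.2))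

section

variable {κ : Type*}

lemma costI_eq_card_disagreementPairs_div_two (P M : SimpleGraph V) (c : V → κ) :
    costI P M c = #(disagreementPairs P M univ c) / 2 := rfl

lemma even_card_disagreementPairs (P M : SimpleGraph V) (S : Finset V) (c : V → κ) :
    Even #(disagreementPairs P M S c) := by
  refine even_card_of_swap_mem (fun p hp => ?_) (fun p hp => (mem_filter.1 hp).2.1)
  simp only [disagreementPairs, mem_filter, mem_product, Prod.fst_swap, Prod.snd_swap] at hp ⊢
  obtain ⟨⟨h1, h2⟩, hne, h⟩ := hp
  refine ⟨⟨h2, h1⟩, hne.symm, ?_⟩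
  rcases h with ⟨hP, hc⟩ | ⟨hM, hc⟩
  · exact Or.inl ⟨hP.symm, Ne.symm hc⟩
  · exact Or.inr ⟨hM.symm, hc.symm⟩

lemma two_mul_costOn (G : SimpleGraph V) (S : Finset V) (c : V → κ) :
    2 * costOn G S c = #(disagreementPairs G Gᶜ S c) := by
  have hcard : costOn G S c = #(disagreementPairs G Gᶜ S c) / 2 := by
    unfold costOn disagreementPairs
    congr 2
    ext p
    simp only [mem_filter, SimpleGraph.compl_adj]
    tauto
  rw [hcard, Nat.two_mul_div_two_of_even (even_card_disagreementPairs _ _ _ _)]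

variable (G Gt : SimpleGraph V)

lemma filter_disagreementPairs_trimmedPlus (c : V → κ) (K : Gt.ConnectedComponent) :
    (disagreementPairs (trimmedPlus G Gt) Gᶜ univ c).filter
        (fun p => Gt.connectedComponentMk p.1 = K ∧ Gt.connectedComponentMk p.2 = K) =
      disagreementPairs G Gᶜ (univ.filter fun x => Gt.connectedComponentMk x = K) c := by
  ext ⟨u, v⟩
  simp only [disagreementPairs, trimmedPlus, mem_filter, mem_product, mem_univ, true_and,
    SimpleGraph.compl_adj]
  constructor
  · rintro ⟨⟨hne, h⟩, hu, hv⟩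
    exact ⟨⟨hu, hv⟩, hne, by tauto⟩
  · rintro ⟨⟨hu, hv⟩, hne, h⟩
    exact ⟨⟨hne, by rw [hu, hv]; tauto⟩, hu, hv⟩

lemma sum_costOn_components_le_costI (c : V → κ) :
    ∑ K, costOn G (univ.filter fun x => Gt.connectedComponentMk x = K) c ≤
      costI (trimmedPlus G Gt) Gᶜ c := by
  rw [costI_eq_card_disagreementPairs_div_two, Nat.le_div_iff_mul_le two_pos, sum_mul,
    card_eq_sum_card_fiberwise (f := fun p => Gt.connectedComponentMk p.1) (t := univ)
      (fun _ _ => mem_univ _)]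
  refine sum_le_sum fun K _ => ?_
  rw [mul_comm, two_mul_costOn, ← filter_disagreementPairs_trimmedPlus, ← filter_filter]
  exact card_le_card (filter_subset _ _)

lemma connectedComponentMk_eq_of_mem_disagreementPairs {p : V × V}
    (hp : p ∈ disagreementPairs (trimmedPlus G Gt) Gᶜ univ Gt.connectedComponentMk) :
    Gt.connectedComponentMk p.1 = Gt.connectedComponentMk p.2 := by
  simp only [disagreementPairs, trimmedPlus, SimpleGraph.compl_adj, mem_filter] at hp
  tauto

lemma costI_connectedComponentMk :
    costI (trimmedPlus G Gt) Gᶜ Gt.connectedComponentMk =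
      ∑ K, costOn G (univ.filter fun x => Gt.connectedComponentMk x = K) (fun _ => (0 : ℕ)) := by
  rw [costI_eq_card_disagreementPairs_div_two,
    Nat.div_eq_iff_eq_mul_left two_pos (even_card_disagreementPairs _ _ _ _).two_dvd, sum_mul,
    card_eq_sum_card_fiberwise (f := fun p => Gt.connectedComponentMk p.1) (t := univ)
      (fun _ _ => mem_univ _)]
  refine sum_congr rfl fun K _ => ?_
  have hsame : ∀ p ∈ disagreementPairs (trimmedPlus G Gt) Gᶜ univ Gt.connectedComponentMk,
      Gt.connectedComponentMk p.1 = K ↔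
        Gt.connectedComponentMk p.1 = K ∧ Gt.connectedComponentMk p.2 = K := fun p hp => by
    rw [← connectedComponentMk_eq_of_mem_disagreementPairs G Gt hp, and_self]
  rw [filter_congr hsame, filter_disagreementPairs_trimmedPlus, mul_comm, two_mul_costOn]
  congr 1
  ext ⟨u, v⟩
  simp only [disagreementPairs, mem_filter, mem_product, mem_univ, true_and]
  constructor <;> rintro ⟨⟨hu, hv⟩, h⟩ <;> simp_all

end

theorem stmt12_general (G Gt : SimpleGraph V)
    (hcomp : ∀ K : Gt.ConnectedComponent, ∀ (κ : Type) (c : V → κ),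
      costOn G (Finset.univ.filter (fun x => Gt.connectedComponentMk x = K))
          (fun _ => (0 : ℕ))
        ≤ costOn G (Finset.univ.filter (fun x => Gt.connectedComponentMk x = K)) c) :
    ∀ (κ : Type) (c : V → κ),
      costI (trimmedPlus G Gt) Gᶜ (Gt.connectedComponentMk)
        ≤ costI (trimmedPlus G Gt) Gᶜ c := by
  intro κ c
  calc costI (trimmedPlus G Gt) Gᶜ Gt.connectedComponentMk
      = ∑ K, costOn G (univ.filter fun x => Gt.connectedComponentMk x = K) (fun _ => (0 : ℕ)) :=
        costI_connectedComponentMk G Gt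
    _ ≤ ∑ K, costOn G (univ.filter fun x => Gt.connectedComponentMk x = K) c :=
        sum_le_sum fun K _ => hcomp K κ c
    _ ≤ costI (trimmedPlus G Gt) Gᶜ c := sum_costOn_components_le_costI G Gt c

/-- optimality on the trimmed instance: let `G̃` be a subgraph of
the `+` graph `G`, and `G'` the instance obtained from the complete instance `G`
by making neutral every `+` edge joining different components of `G̃`. If for
every connected component of `G̃` no partition into two or more clusters beats
keeping it whole, then clustering by the connected components of `G̃` is optimal
for `G'`. -/
theorem stmt12 (G Gt : SimpleGraph V) (hsub : Gt ≤ G)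
    (hcomp : ∀ K : Gt.ConnectedComponent, ∀ (κ : Type) (c : V → κ),
      costOn G (Finset.univ.filter (fun x => Gt.connectedComponentMk x = K))
          (fun _ => (0 : ℕ))
        ≤ costOn G (Finset.univ.filter (fun x => Gt.connectedComponentMk x = K)) c) :
    ∀ (κ : Type) (c : V → κ),
      costI (trimmedPlus G Gt) Gᶜ (Gt.connectedComponentMk)
        ≤ costI (trimmedPlus G Gt) Gᶜ c :=
  stmt12_general G Gt hcomp

end
end

section
/- Charging bound for non-agreement edges: Let O be any clustering of the complete signed graph G and let OPT be its cost. Let β > 0. The number of + edges {u,v} such that u and v are NOT in agreement (|N(u) △ N(v)| ≥ β·max(d(u), d(v))) but u and v lie in the same cluster of O is at most (2/β)·OPT. -/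
open Finset Classical

noncomputable section

variable {V : Type*} [Fintype V] [DecidableEq V]

-- auxiliary lemmas


lemma even_card_of_invol {α : Type*} [DecidableEq α] (i : α → α) :
    ∀ s : Finset α, (∀ a ∈ s, i a ∈ s) → (∀ a ∈ s, i (i a) = a) →
      (∀ a ∈ s, i a ≠ a) → Even s.card := by
  intro s
  induction s using Finset.strongInduction with
  | _ s ih =>
    intro hmem hinv hne
    rcases s.eq_empty_or_nonempty with rfl | ⟨a, ha⟩
    · simp
    · have hia := hmem a ha
      have hnea := hne a ha
      set t := s \ {a, i a} with ht
      have hpair : ({a, i a} : Finset α) ⊆ s := by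
        intro x hx
        simp only [mem_insert, mem_singleton] at hx
        rcases hx with rfl | rfl <;> assumption
      have hcard2 : ({a, i a} : Finset α).card = 2 := by
        rw [card_insert_of_notMem (by simp [Ne.symm hnea]), card_singleton]
      have h2 : 2 ≤ s.card := hcard2 ▸ card_le_card hpair
      have hcard : s.card = t.card + 2 := by
        rw [ht, card_sdiff_of_subset hpair, hcard2]; omega
      have hts : t ⊂ s := by
        refine Finset.ssubset_of_subset_of_ssubset (Finset.Subset.refl t) ?_
        refine ⟨Finset.sdiff_subset, fun hsub => ?_⟩
        have := hsub ha
        simp [ht] at this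
      have hmemt : ∀ b ∈ t, b ∈ s ∧ b ≠ a ∧ b ≠ i a := by
        intro b hb
        simp only [ht, mem_sdiff, mem_insert, mem_singleton] at hb
        tauto
      have hE : Even t.card := by
        refine ih t hts ?_ ?_ ?_
        · intro b hb
          obtain ⟨hbs, hba, hbia⟩ := hmemt b hb
          simp only [ht, mem_sdiff, mem_insert, mem_singleton]
          refine ⟨hmem b hbs, ?_⟩
          rintro (h | h)
          · exact hbia (by rw [← hinv b hbs, h])
          · have := congrArg i h
            rw [hinv b hbs, hinv a ha] at this
            exact hba this
        · intro b hb; exact hinv b (hmemt b hb).1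
        · intro b hb; exact hne b (hmemt b hb).1
      obtain ⟨k, hk⟩ := hE
      exact ⟨k + 1, by omega⟩

variable (G : SimpleGraph V)

lemma mem_closedNbhd_self (v : V) : v ∈ closedNbhd G v := mem_insert_self _ _

lemma deg_pos (v : V) : 0 < deg G v := card_pos.2 ⟨v, mem_closedNbhd_self G v⟩

lemma mem_closedNbhd_of_adj {u v : V} (h : G.Adj u v) : v ∈ closedNbhd G u := by
  simp [closedNbhd, h]

lemma mem_closedNbhd_iff {u v : V} : v ∈ closedNbhd G u ↔ v = u ∨ G.Adj u v := by
  simp [closedNbhd]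

/-- Core charging case analysis. -/
lemma charge {κ : Type*} (c : V → κ) {u v w : V} (hadj : G.Adj u v)
    (hc : c u = c v) (hw1 : w ∈ closedNbhd G u) (hw2 : w ∉ closedNbhd G v) :
    (u ≠ w ∧ ((G.Adj u w ∧ c u ≠ c w) ∨ (¬ G.Adj u w ∧ c u = c w))) ∨
    (v ≠ w ∧ ((G.Adj v w ∧ c v ≠ c w) ∨ (¬ G.Adj v w ∧ c v = c w))) := by
  have hwu : w ≠ u := by
    rintro rfl
    exact hw2 (mem_closedNbhd_of_adj G hadj.symm)
  have hauw : G.Adj u w := by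
    rcases (mem_closedNbhd_iff G).1 hw1 with h | h
    · exact absurd h hwu
    · exact h
  have hnvw : ¬ G.Adj v w := fun h => hw2 (mem_closedNbhd_of_adj G h)
  have hwv : w ≠ v := by
    rintro rfl
    exact hw2 (mem_closedNbhd_self G w)
  by_cases hcw : c u = c w
  · exact Or.inr ⟨hwv.symm, Or.inr ⟨hnvw, hc ▸ hcw⟩⟩
  · exact Or.inl ⟨hwu.symm, Or.inl ⟨hauw, hcw⟩⟩

/-- charging bound for non-agreement edges: for any clustering
`c` of the complete signed instance `G` with cost `OPT`, the number of `+`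
edges whose endpoints are not in agreement but lie in the same cluster of `c`
is at most `(2/β)·OPT`. -/
theorem stmt13 (G : SimpleGraph V) (β : ℝ) (hβ0 : 0 < β)
    {κ : Type*} (c : V → κ) :
    (((((Finset.univ ×ˢ Finset.univ : Finset (V × V)).filter
        (fun p : V × V => G.Adj p.1 p.2 ∧ ¬ Agree β G p.1 p.2 ∧ c p.1 = c p.2)).card
          / 2 : ℕ) : ℝ))
      ≤ (2 / β) * (costOn G Finset.univ c : ℝ) := by
  classical
  set B : Finset (V × V) := (Finset.univ ×ˢ Finset.univ).filter
      (fun p : V × V => G.Adj p.1 p.2 ∧ ¬ Agree β G p.1 p.2 ∧ c p.1 = c p.2) with hBdef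
  set D : Finset (V × V) := ((Finset.univ ×ˢ Finset.univ : Finset (V × V)).filter
      (fun p : V × V => p.1 ≠ p.2 ∧
        ((G.Adj p.1 p.2 ∧ c p.1 ≠ c p.2) ∨ (¬ G.Adj p.1 p.2 ∧ c p.1 = c p.2)))) with hDdef
  have hmemD : ∀ p : V × V, p ∈ D ↔ (p.1 ≠ p.2 ∧
      ((G.Adj p.1 p.2 ∧ c p.1 ≠ c p.2) ∨ (¬ G.Adj p.1 p.2 ∧ c p.1 = c p.2))) := by
    intro p; simp [hDdef]
  have hmemB : ∀ p : V × V, p ∈ B ↔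
      (G.Adj p.1 p.2 ∧ ¬ Agree β G p.1 p.2 ∧ c p.1 = c p.2) := by
    intro p; simp [hBdef]
  have hcost : costOn G Finset.univ c = D.card / 2 := rfl
  set T : Finset ((V × V) × V) := (B ×ˢ (Finset.univ : Finset V)).filter
      (fun q => q.2 ∈ symmDiff (closedNbhd G q.1.1) (closedNbhd G q.1.2)) with hTdef
  have hmemT : ∀ q : (V × V) × V, q ∈ T ↔
      (q.1 ∈ B ∧ q.2 ∈ symmDiff (closedNbhd G q.1.1) (closedNbhd G q.1.2)) := by
    intro q; simp [hTdef]
  set f : (V × V) × V → V × V := fun q =>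
    if (q.1.1, q.2) ∈ D then (q.1.1, q.2) else (q.1.2, q.2) with hfdef
  set wt : (V × V) × V → ℝ :=
    fun q => 1 / (β * max (deg G q.1.1 : ℝ) (deg G q.1.2 : ℝ)) with hwdef
  have hmaxpos : ∀ u v : V, (0 : ℝ) < β * max (deg G u : ℝ) (deg G v : ℝ) := by
    intro u v
    have h1 : (0 : ℝ) < (deg G u : ℝ) := by exact_mod_cast deg_pos G u
    exact mul_pos hβ0 (lt_of_lt_of_le h1 (le_max_left _ _))
  -- f maps T into D
  have hfD : ∀ q ∈ T, f q ∈ D := by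
    intro q hq
    obtain ⟨hqB, hqS⟩ := (hmemT q).1 hq
    obtain ⟨hadj, hnag, hc⟩ := (hmemB q.1).1 hqB
    have hor : (q.1.1, q.2) ∈ D ∨ (q.1.2, q.2) ∈ D := by
      rw [Finset.mem_symmDiff] at hqS
      rcases hqS with ⟨h1, h2⟩ | ⟨h1, h2⟩
      · rcases charge G c hadj hc h1 h2 with h | h
        · exact Or.inl ((hmemD _).2 h)
        · exact Or.inr ((hmemD _).2 h)
      · rcases charge G c hadj.symm hc.symm h1 h2 with h | h
        · exact Or.inr ((hmemD _).2 h)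
        · exact Or.inl ((hmemD _).2 h)
    rw [hfdef]
    by_cases h : (q.1.1, q.2) ∈ D
    · simpa [h] using h
    · simp only [h, if_false]
      tauto
  -- step B : (B.card : ℝ) ≤ ∑ q in T, wt q
  have stepB : (B.card : ℝ) ≤ ∑ q ∈ T, wt q := by
    rw [← Finset.sum_fiberwise_of_maps_to (g := fun q : (V × V) × V => q.1)
      (fun q hq => ((hmemT q).1 hq).1) wt]
    rw [Finset.card_eq_sum_ones B]
    push_cast
    refine Finset.sum_le_sum ?_
    intro p hp
    have hfib : T.filter (fun q => q.1 = p)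
        = {p} ×ˢ symmDiff (closedNbhd G p.1) (closedNbhd G p.2) := by
      ext ⟨p', w⟩
      simp only [mem_filter, hmemT, Finset.mem_product, mem_singleton]
      constructor
      · rintro ⟨⟨hB', hs⟩, rfl⟩
        exact ⟨rfl, hs⟩
      · rintro ⟨rfl, hs⟩
        exact ⟨⟨hp, hs⟩, rfl⟩
    rw [hfib, Finset.sum_product, Finset.sum_singleton]
    have hwt : ∀ y : V, wt (p, y) = 1 / (β * max (deg G p.1 : ℝ) (deg G p.2 : ℝ)) := by
      intro y; rw [hwdef]
    simp only [hwt]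
    rw [Finset.sum_const, nsmul_eq_mul]
    obtain ⟨hadj, hnag, hc⟩ := (hmemB p).1 hp
    rw [Agree, not_lt] at hnag
    rw [mul_one_div, le_div_iff₀ (hmaxpos p.1 p.2), one_mul]
    exact hnag
  -- step C : ∑ q in T, wt q ≤ D.card * (2/β)
  have stepC : ∑ q ∈ T, wt q ≤ (D.card : ℝ) * (2 / β) := by
    rw [← Finset.sum_fiberwise_of_maps_to (g := f) hfD wt]
    have hbound : ∀ e ∈ D, ∑ q ∈ T.filter (fun q => f q = e), wt q ≤ 2 / β := by
      intro e he
      have hdx : (0 : ℝ) < (deg G e.1 : ℝ) := by exact_mod_cast deg_pos G e.1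
      have hwb : ∀ q ∈ T.filter (fun q => f q = e),
          wt q ≤ 1 / (β * (deg G e.1 : ℝ)) := by
        intro q hq
        rw [mem_filter] at hq
        obtain ⟨hqT, hqf⟩ := hq
        have hcase : e.1 = q.1.1 ∨ e.1 = q.1.2 := by
          rw [hfdef] at hqf
          by_cases h : (q.1.1, q.2) ∈ D
          · simp only [h, if_true] at hqf
            exact Or.inl (by rw [← hqf])
          · simp only [h, if_false] at hqf
            exact Or.inr (by rw [← hqf])
        have hle : (deg G e.1 : ℝ) ≤ max (deg G q.1.1 : ℝ) (deg G q.1.2 : ℝ) := by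
          rcases hcase with h | h
          · rw [h]; exact le_max_left _ _
          · rw [h]; exact le_max_right _ _
        rw [hwdef]
        apply one_div_le_one_div_of_le (mul_pos hβ0 hdx)
        exact mul_le_mul_of_nonneg_left hle hβ0.le
      calc ∑ q ∈ T.filter (fun q => f q = e), wt q
          ≤ (T.filter (fun q => f q = e)).card • (1 / (β * (deg G e.1 : ℝ))) :=
            Finset.sum_le_card_nsmul _ _ _ hwb
        _ ≤ (2 * (deg G e.1 : ℝ)) * (1 / (β * (deg G e.1 : ℝ))) := by
            rw [nsmul_eq_mul]
            apply mul_le_mul_of_nonneg_right _ (by positivity)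
            have hsub : T.filter (fun q => f q = e) ⊆
                (({e.1} ×ˢ closedNbhd G e.1 ∪ closedNbhd G e.1 ×ˢ {e.1}) ×ˢ {e.2}) := by
              intro q hq
              rw [mem_filter] at hq
              obtain ⟨hqT, hqf⟩ := hq
              obtain ⟨hqB, _⟩ := (hmemT q).1 hqT
              obtain ⟨hadj, _, _⟩ := (hmemB q.1).1 hqB
              rw [Finset.mem_product, Finset.mem_union, Finset.mem_product,
                Finset.mem_product, mem_singleton, mem_singleton, mem_singleton]
              rw [hfdef] at hqf
              by_cases h : (q.1.1, q.2) ∈ D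
              · simp only [h, if_true] at hqf
                have h1 : q.1.1 = e.1 := by rw [← hqf]
                have h2 : q.2 = e.2 := by rw [← hqf]
                refine ⟨Or.inl ⟨h1, ?_⟩, h2⟩
                rw [← h1]
                exact mem_closedNbhd_of_adj G hadj
              · simp only [h, if_false] at hqf
                have h1 : q.1.2 = e.1 := by rw [← hqf]
                have h2 : q.2 = e.2 := by rw [← hqf]
                refine ⟨Or.inr ⟨?_, h1⟩, h2⟩
                rw [← h1]
                exact mem_closedNbhd_of_adj G hadj.symm
            have hcard : (T.filter (fun q => f q = e)).card ≤ 2 * deg G e.1 := by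
              calc (T.filter (fun q => f q = e)).card
                  ≤ (({e.1} ×ˢ closedNbhd G e.1 ∪ closedNbhd G e.1 ×ˢ {e.1}) ×ˢ
                      ({e.2} : Finset V)).card := card_le_card hsub
                _ ≤ 2 * deg G e.1 := by
                    rw [Finset.card_product, card_singleton, mul_one]
                    calc (({e.1} ×ˢ closedNbhd G e.1 ∪ closedNbhd G e.1 ×ˢ {e.1})).card
                        ≤ ({e.1} ×ˢ closedNbhd G e.1).card
                          + (closedNbhd G e.1 ×ˢ ({e.1} : Finset V)).card :=
                            card_union_le _ _
                      _ = 2 * deg G e.1 := by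
                          rw [Finset.card_product, Finset.card_product, card_singleton,
                            deg]
                          ring
            exact_mod_cast hcard
        _ = 2 / β := by
            field_simp
    calc ∑ e ∈ D, ∑ q ∈ T.filter (fun q => f q = e), wt q
        ≤ ∑ e ∈ D, (2 / β : ℝ) := Finset.sum_le_sum hbound
      _ = (D.card : ℝ) * (2 / β) := by rw [Finset.sum_const, nsmul_eq_mul]
  -- evenness of D.card
  have heven : Even D.card := by
    refine even_card_of_invol Prod.swap D ?_ ?_ ?_
    · intro p hp
      rw [hmemD] at hp ⊢
      obtain ⟨h1, h2⟩ := hp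
      refine ⟨h1.symm, ?_⟩
      rcases h2 with ⟨h3, h4⟩ | ⟨h3, h4⟩
      · exact Or.inl ⟨h3.symm, fun h => h4 h.symm⟩
      · exact Or.inr ⟨fun h => h3 h.symm, h4.symm⟩
    · intro p _; exact Prod.swap_swap p
    · intro p hp h
      rw [hmemD] at hp
      exact hp.1 (congrArg Prod.fst h).symm
  obtain ⟨k, hk⟩ := heven
  have hcost' : (costOn G Finset.univ c : ℝ) = (k : ℝ) := by
    rw [hcost, hk]
    norm_cast
    omega
  have hDk : (D.card : ℝ) = 2 * (k : ℝ) := by rw [hk]; push_cast; ring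
  have key : (B.card : ℝ) ≤ 2 * (k : ℝ) * (2 / β) := by
    calc (B.card : ℝ) ≤ ∑ q ∈ T, wt q := stepB
      _ ≤ (D.card : ℝ) * (2 / β) := stepC
      _ = 2 * (k : ℝ) * (2 / β) := by rw [hDk]
  calc ((B.card / 2 : ℕ) : ℝ) ≤ (B.card : ℝ) / 2 := Nat.cast_div_le
    _ ≤ (2 * (k : ℝ) * (2 / β)) / 2 := by linarith
    _ = (2 / β) * (k : ℝ) := by ring
    _ = (2 / β) * (costOn G Finset.univ c : ℝ) := by rw [hcost']
end
end

section
/- Agreement sampling completeness: Let u, v be vertices with |N(u) △ N(v)| < 0.8·β·max(d(u),d(v)) (0.8-weak agreement). With the same sampling (each vertex independently with probability p = min(a·log n/(β·j),1), j ≤ max(d(u),d(v))), and X = |S ∩ (N(u) △ N(v))|, we have E[X] ≤ 0.8τ with τ = (a log n/j)·max(d(u),d(v)), and by the Chernoff upper-tail bound Pr[X > 0.9τ] ≤ exp(-(1/64)·(a log n)/3) ≤ n^{-3} for a ≥ 600. -/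
/-!
The sample `S` is encoded as `ω : V → Bool` with independent Bernoulli(p) coordinates, and
`X = ∑_{i ∈ s} 1[ω i]` for `s = N(u) △ N(v)`. Its mean is `p·|s|`, which is at most `0.8τ` by
weak agreement and `p ≤ a log n/(βj)`. By independence its moment generating function is
`(1 + (eᵗ - 1)p)^|s| ≤ exp ((eᵗ - 1)·p|s|)`, so Markov's inequality for `e^{tX}` at `t = 1/8` gives
`Pr[X ≥ 0.9τ] ≤ exp (-0.9τ/8 + (e^{1/8} - 1)·0.8τ) ≤ exp (-τ/192)`, and `τ ≥ a log n` because
`j ≤ max(d(u), d(v))`.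
-/

open Finset MeasureTheory ProbabilityTheory Real
open scoped NNReal

lemma card_sampled_eq_sum_coin {ι : Type*} (s : Finset ι) :
    (fun ω : ι → Bool => (#{i ∈ s | ω i = true} : ℝ))
      = ∑ i ∈ s, fun ω => if ω i = true then (1 : ℝ) else 0 := by
  ext ω
  rw [Finset.sum_apply, natCast_card_filter]

section BernoulliSampling

variable {ι : Type*} [Fintype ι] {p : ℝ≥0} (hp : p ≤ 1)

noncomputable abbrev bernoulliPi : Measure (ι → Bool) :=
  Measure.pi fun _ => (PMF.bernoulli p hp).toMeasure

lemma integral_comp_eval_bernoulliPi (i : ι) (g : Bool → ℝ) :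
    ∫ ω, g (ω i) ∂bernoulliPi hp = p * g true + (1 - p) * g false := by
  rw [← integral_map (measurable_pi_apply i).aemeasurable (by fun_prop),
    (measurePreserving_eval _ i).map_eq, PMF.integral_eq_sum]
  simp [PMF.bernoulli_apply, NNReal.coe_sub hp]

lemma integral_coin (i : ι) :
    ∫ ω, (if ω i = true then (1 : ℝ) else 0) ∂bernoulliPi hp = p := by
  simpa using integral_comp_eval_bernoulliPi hp i fun b => if b = true then (1 : ℝ) else 0

lemma mgf_coin (i : ι) (t : ℝ) :
    mgf (fun ω => if ω i = true then (1 : ℝ) else 0) (bernoulliPi hp) t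
      = 1 + (exp t - 1) * p := by
  have := integral_comp_eval_bernoulliPi hp i fun b => exp (t * if b = true then (1 : ℝ) else 0)
  simp only [mgf, this, ↓reduceIte, mul_one, Bool.false_eq_true, mul_zero, exp_zero]
  ring

lemma iIndepFun_coin :
    iIndepFun (fun i (ω : ι → Bool) => if ω i = true then (1 : ℝ) else 0) (bernoulliPi hp) :=
  iIndepFun_pi (μ := fun _ => (PMF.bernoulli p hp).toMeasure)
    (X := fun _ b => if b = true then (1 : ℝ) else 0) fun _ => by fun_prop

variable (s : Finset ι)

lemma integral_card_sampled :
    ∫ ω, (#{i ∈ s | ω i = true} : ℝ) ∂bernoulliPi hp = #s * p := by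
  simp only [natCast_card_filter]
  rw [integral_finsetSum _ fun i _ => .of_finite]
  simp [integral_coin]

lemma mgf_card_sampled_le (t : ℝ) :
    mgf (fun ω => (#{i ∈ s | ω i = true} : ℝ)) (bernoulliPi hp) t
      ≤ exp ((exp t - 1) * (#s * p)) := by
  rw [card_sampled_eq_sum_coin, (iIndepFun_coin hp).mgf_sum (fun _ => by fun_prop)]
  calc ∏ i ∈ s, mgf (fun ω => if ω i = true then (1 : ℝ) else 0) (bernoulliPi hp) t
      = (1 + (exp t - 1) * p) ^ #s := by simp [mgf_coin]
    _ ≤ exp ((exp t - 1) * p) ^ #s := by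
      have hp' : (p : ℝ) ≤ 1 := hp
      gcongr
      · nlinarith [exp_pos t, p.coe_nonneg]
      · linarith [add_one_le_exp ((exp t - 1) * p)]
    _ = exp ((exp t - 1) * (#s * p)) := by rw [← exp_nat_mul]; ring_nf

lemma measureReal_card_sampled_ge_le {t : ℝ} (ht : 0 ≤ t) (c : ℝ) {U : ℝ} (hU : #s * p ≤ U) :
    (bernoulliPi hp).real {ω | c ≤ #{i ∈ s | ω i = true}}
      ≤ exp (-t * c + (exp t - 1) * U) := by
  calc _ ≤ exp (-t * c) * mgf (fun ω => (#{i ∈ s | ω i = true} : ℝ)) (bernoulliPi hp) t :=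
        measure_ge_le_exp_mul_mgf c ht .of_finite
    _ ≤ exp (-t * c) * exp ((exp t - 1) * U) := by
        have : 0 ≤ exp t - 1 := sub_nonneg.2 (one_le_exp ht)
        grw [mgf_card_sampled_le, hU]
    _ = _ := (exp_add _ _).symm

end BernoulliSampling

lemma exp_one_div_eight_lt : exp (1 / 8) < 1.134 := by
  have := exp_bound' (x := 1 / 8) (by norm_num) (by norm_num) (n := 3) (by norm_num)
  norm_num [Finset.sum_range_succ, Nat.factorial] at this
  linarith

/-- The multiplicative bound `exp (-ε²U/3)` with `ε = 1/8`, `U = 0.8τ` is too weak here (it gives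
only `exp (-0.8·a log n/192)`); the exponent at `t = 1/8` itself is below `-τ/192`. -/
lemma chernoff_exponent_le {x τ : ℝ} (hx : 0 ≤ x) (hxτ : x ≤ τ) :
    -(1 / 8) * (0.9 * τ) + (exp (1 / 8) - 1) * (0.8 * τ) ≤ -(1 / 64) * x / 3 := by
  nlinarith [exp_one_div_eight_lt]

lemma exp_neg_mul_log_le_rpow_neg_three {a x : ℝ} (ha : 576 ≤ a) (hx : 1 ≤ x) :
    exp (-(1 / 64) * (a * log x) / 3) ≤ x ^ (-3 : ℝ) := by
  rw [rpow_def_of_pos (by linarith)]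
  gcongr
  nlinarith [log_nonneg hx]

/-- agreement sampling, completeness: `u`, `v` have
neighborhoods `A = N(u)`, `B = N(v)` in 0.8-weak agreement
(`|A △ B| < 0.8·β·max(|A|,|B|)`). With the same sampling (each vertex of `V`,
`n = |V| ≥ 2`, independently with probability `p = min(a·log n/(β·j), 1)`,
`0 < j ≤ max(|A|,|B|)`) and `X = |S ∩ (A △ B)|`, we have `E[X] ≤ 0.8τ` with
`τ = (a·log n/j)·max(|A|,|B|)`, and (Chernoff upper tail)
`Pr[X > 0.9τ] ≤ exp(-(1/64)·(a·log n)/3) ≤ n^{-3}` for `a ≥ 600`. -/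
theorem stmt17 {V : Type*} [Fintype V] [DecidableEq V]
    (A B : Finset V) (β j a : ℝ)
    (hβ0 : 0 < β) (hj0 : 0 < j)
    (hn : 2 ≤ Fintype.card V)
    (hjle : j ≤ max (A.card : ℝ) (B.card : ℝ))
    (ha : 600 ≤ a)
    (hagree : ((symmDiff A B).card : ℝ)
      < 0.8 * β * max (A.card : ℝ) (B.card : ℝ))
    (p : ℝ) (hp : p = min (a * Real.log (Fintype.card V) / (β * j)) 1)
    (hp1 : ENNReal.ofReal p ≤ 1)
    (τ : ℝ)
    (hτ : τ = a * Real.log (Fintype.card V) / j * max (A.card : ℝ) (B.card : ℝ))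
    (μ : Measure (V → Bool))
    (hμ : μ = Measure.pi
      (fun _ : V => (PMF.bernoulli (Real.toNNReal p) (ENNReal.coe_le_one_iff.mp hp1)).toMeasure))
    (X : (V → Bool) → ℝ)
    (hX : X = fun ω => (((symmDiff A B).filter (fun v => ω v = true)).card : ℝ)) :
    (∫ ω, X ω ∂μ) ≤ 0.8 * τ
    ∧ μ {ω | X ω > 0.9 * τ}
        ≤ ENNReal.ofReal
            (Real.exp (-(1 / 64) * (a * Real.log (Fintype.card V)) / 3))
    ∧ Real.exp (-(1 / 64) * (a * Real.log (Fintype.card V)) / 3)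
        ≤ (Fintype.card V : ℝ) ^ (-3 : ℝ) := by
  set L := Real.log (Fintype.card V)
  have hL : 0 < L := Real.log_pos (by exact_mod_cast hn)
  have hp0 : 0 ≤ p := hp ▸ le_min (by positivity) zero_le_one
  have hmean : #(symmDiff A B) * (p.toNNReal : ℝ) ≤ 0.8 * τ := by
    have hM : 0 < max (A.card : ℝ) (B.card : ℝ) := hj0.trans_le hjle
    rw [Real.coe_toNNReal _ hp0, hτ]
    calc _ ≤ 0.8 * β * max (A.card : ℝ) (B.card : ℝ) * (a * L / (β * j)) :=
          mul_le_mul hagree.le (hp ▸ min_le_left _ _) hp0 (by positivity)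
      _ = _ := by field_simp
  have hτ_ge : a * L ≤ τ := by
    rw [hτ]
    calc a * L = a * L / j * j := by field_simp
      _ ≤ _ := by gcongr
  have : IsProbabilityMeasure μ := hμ ▸ inferInstance
  have htail : μ.real {ω | 0.9 * τ ≤ X ω}
      ≤ exp (-(1 / 8) * (0.9 * τ) + (exp (1 / 8) - 1) * (0.8 * τ)) := by
    subst hμ hX
    exact measureReal_card_sampled_ge_le _ _ (by norm_num) _ hmean
  refine ⟨by subst hμ hX; exact (integral_card_sampled _ _).trans_le hmean, ?_,
    exp_neg_mul_log_le_rpow_neg_three (by linarith) (by exact_mod_cast one_le_two.trans hn)⟩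
  calc μ {ω | X ω > 0.9 * τ} ≤ μ {ω | 0.9 * τ ≤ X ω} :=
        measure_mono <| Set.ofPred_subset_ofPred.2 fun _ => le_of_lt
    _ = ENNReal.ofReal (μ.real {ω | 0.9 * τ ≤ X ω}) :=
        (ofReal_measureReal (measure_ne_top _ _)).symm
    _ ≤ _ := ENNReal.ofReal_le_ofReal <|
      htail.trans (exp_le_exp.2 (chernoff_exponent_le (by positivity) hτ_ge))
end
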